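/- arXiv:1105.5436 — 7 statements merged into one kernel-verified Lean document; each statement's English description precedes it below -/
import Mathlib

section
/- Let X = X_Σ be the smooth toric Fano 4-fold E_1, where Σ is the complete fan in N ≅ Z^4 whose maximal cones are the cones over the facets of the convex hull of its minimal ray generators v_1 = e_1, v_2 = e_2, v_3 = e_3, v_4 = e_4, v_5 = 2e_1 − e_2 − e_3 − e_4, v_6 = e_1 + e_2, v_7 = −e_1. Then ch_2(T_X) · V(⟨v_2, v_3⟩) = −2; in particular X is not 2-Fano. -/
/-!
Statement 9 (from "Positivity of the second Chern character of toric Fano 4-folds"):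
the toric Fano 4-fold `E₁` of Batyrev's classification satisfies
`ch₂(T_X) · V(⟨v₂, v₃⟩) = -2`; in particular `X = X_Σ(E₁)` is not 2-Fano.

Since Mathlib has no toric geometry, we model the situation faithfully and concretely:
* the fan `Σ` is the complete fan in `ℤ⁴ ⊗ ℚ` whose maximal cones are the cones over the
  facets of the convex hull of the ray generators (a facet corresponds to a set `s` of rays
  lying on a hyperplane `⟨u, ·⟩ = 1` with all remaining rays strictly below it);
* the rational Chow ring of the associated smooth complete toric variety is presented, as a
  commutative `ℚ`-algebra, by the classes `D i` of the invariant divisors subject to the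
  Stanley–Reisner relations and the linear relations `div(χᵘ) ∼ 0`, together with the degree
  map `deg` sending the class of a point (the product of the divisors of a maximal cone) to 1;
* `ch₂(T_X) = ½ ∑ᵢ Dᵢ²`, the class of the invariant surface `V(⟨v_i, v_j⟩)` is `D i * D j`,
  and `X` is 2-Fano iff `ch₂(T_X) · S > 0` for every irreducible surface `S ⊆ X` (so in
  particular for every invariant surface).
-/

open Finset

/-- Rational dot product on `Fin 4 → ℚ`. -/
def dotQ (u x : Fin 4 → ℚ) : ℚ := ∑ k, u k * x k

/-- `FanMaxCone v s`: the rays indexed by `s` are exactly the vertices of a facet of the convex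
hull of the rays `v`, i.e. they lie on a hyperplane `⟨u, ·⟩ = 1` and all other rays lie
strictly below it; the polytope is simplicial of dimension 4, so a facet has exactly four
vertices (without `s.card = 4` every face, the empty one too, would qualify).  The cone over
such a facet is a maximal cone of the fan `Σ`. -/
def FanMaxCone {d : ℕ} (v : Fin d → Fin 4 → ℚ) (s : Finset (Fin d)) : Prop :=
  s.card = 4 ∧ ∃ u : Fin 4 → ℚ, (∀ i ∈ s, dotQ u (v i) = 1) ∧ ∀ j ∉ s, dotQ u (v j) < 1

/-- `FanCone v s`: the rays indexed by `s` span a cone of the fan `Σ` (i.e. a face of one of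
the maximal cones). -/
def FanCone {d : ℕ} (v : Fin d → Fin 4 → ℚ) (s : Finset (Fin d)) : Prop :=
  ∃ t : Finset (Fin d), FanMaxCone v t ∧ s ⊆ t

/-- The minimal ray generators of the fan of the toric Fano 4-fold `E₁`:
`v₁ = e₁`, `v₂ = e₂`, `v₃ = e₃`, `v₄ = e₄`, `v₅ = 2e₁ - e₂ - e₃ - e₄`, `v₆ = e₁ + e₂`,
`v₇ = -e₁` (indexed here by `0, …, 6`). -/
def E1rays : Fin 7 → Fin 4 → ℚ :=
  ![![1,0,0,0], ![0,1,0,0], ![0,0,1,0], ![0,0,0,1], ![2,-1,-1,-1], ![1,1,0,0], ![-1,0,0,0]]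

lemma dQ0 (u : Fin 4 → ℚ) : dotQ u (E1rays 0) = u 0 := by
  show dotQ u ![1,0,0,0] = u 0; simp [dotQ, Fin.sum_univ_four]
lemma dQ1 (u : Fin 4 → ℚ) : dotQ u (E1rays 1) = u 1 := by
  show dotQ u ![0,1,0,0] = u 1; simp [dotQ, Fin.sum_univ_four]
lemma dQ2 (u : Fin 4 → ℚ) : dotQ u (E1rays 2) = u 2 := by
  show dotQ u ![0,0,1,0] = u 2; simp [dotQ, Fin.sum_univ_four]
lemma dQ3 (u : Fin 4 → ℚ) : dotQ u (E1rays 3) = u 3 := by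
  show dotQ u ![0,0,0,1] = u 3; simp [dotQ, Fin.sum_univ_four]
lemma dQ4 (u : Fin 4 → ℚ) : dotQ u (E1rays 4) = 2 * u 0 - u 1 - u 2 - u 3 := by
  show dotQ u ![2,-1,-1,-1] = _; simp [dotQ, Fin.sum_univ_four]; ring
lemma dQ5 (u : Fin 4 → ℚ) : dotQ u (E1rays 5) = u 0 + u 1 := by
  show dotQ u ![1,1,0,0] = _; simp [dotQ, Fin.sum_univ_four]
lemma dQ6 (u : Fin 4 → ℚ) : dotQ u (E1rays 6) = -u 0 := by
  show dotQ u ![-1,0,0,0] = _; simp [dotQ, Fin.sum_univ_four]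

lemma maxcone1245 : FanMaxCone E1rays {1,2,4,5} := by
  refine ⟨by decide, ![0,1,1,-3], ?_, ?_⟩
  · intro i hi; fin_cases hi <;> simp [dQ1, dQ2, dQ4, dQ5] <;> norm_num
  · intro j hj; fin_cases j <;> simp_all [dQ0, dQ1, dQ2, dQ3, dQ4, dQ5, dQ6] <;> norm_num

lemma maxcone1246 : FanMaxCone E1rays {1,2,4,6} := by
  refine ⟨by decide, ![-1,1,1,-5], ?_, ?_⟩
  · intro i hi; fin_cases hi <;> simp [dQ1, dQ2, dQ4, dQ6] <;> norm_num
  · intro j hj; fin_cases j <;> simp_all [dQ0, dQ1, dQ2, dQ3, dQ4, dQ5, dQ6] <;> norm_num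

lemma ncone01 (s : Finset (Fin 7)) (h0 : 0 ∈ s) (h1 : 1 ∈ s) : ¬ FanCone E1rays s := by
  rintro ⟨t, ⟨-, u, hu1, hu2⟩, hst⟩
  have d0 := hu1 0 (hst h0)
  have d1 := hu1 1 (hst h1)
  have d5 : dotQ u (E1rays 5) ≤ 1 := by
    by_cases h : (5 : Fin 7) ∈ t
    · exact le_of_eq (hu1 5 h)
    · exact le_of_lt (hu2 5 h)
  rw [dQ0] at d0; rw [dQ1] at d1; rw [dQ5] at d5; linarith

lemma ncone56 (s : Finset (Fin 7)) (h5 : 5 ∈ s) (h6 : 6 ∈ s) : ¬ FanCone E1rays s := by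
  rintro ⟨t, ⟨-, u, hu1, hu2⟩, hst⟩
  have d5 := hu1 5 (hst h5)
  have d6 := hu1 6 (hst h6)
  have d1 : dotQ u (E1rays 1) ≤ 1 := by
    by_cases h : (1 : Fin 7) ∈ t
    · exact le_of_eq (hu1 1 h)
    · exact le_of_lt (hu2 1 h)
  rw [dQ5] at d5; rw [dQ6] at d6; rw [dQ1] at d1; linarith

lemma ncone1234 (s : Finset (Fin 7)) (h1 : 1 ∈ s) (h2 : 2 ∈ s) (h3 : 3 ∈ s) (h4 : 4 ∈ s) :
    ¬ FanCone E1rays s := by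
  rintro ⟨t, ⟨-, u, hu1, hu2⟩, hst⟩
  have d1 := hu1 1 (hst h1)
  have d2 := hu1 2 (hst h2)
  have d3 := hu1 3 (hst h3)
  have d4 := hu1 4 (hst h4)
  have d0 : dotQ u (E1rays 0) ≤ 1 := by
    by_cases h : (0 : Fin 7) ∈ t
    · exact le_of_eq (hu1 0 h)
    · exact le_of_lt (hu2 0 h)
  rw [dQ1] at d1; rw [dQ2] at d2; rw [dQ3] at d3; rw [dQ4] at d4; rw [dQ0] at d0; linarith

theorem E1_ch2_V23_eq_neg_two_and_not_twoFano
    (A : Type*) [CommRing A] [Algebra ℚ A]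
    -- `D i` = class of the invariant prime divisor `D_i = V(⟨v_i⟩)` in the rational Chow ring `A`
    (D : Fin 7 → A)
    -- `deg` = the degree map on 0-cycle classes
    (deg : A →ₗ[ℚ] ℚ)
    -- Stanley–Reisner relations of the fan
    (hSR : ∀ s : Finset (Fin 7), ¬ FanCone E1rays s → ∏ i ∈ s, D i = 0)
    -- linear relations: `div(χᵘ) = ∑ᵢ ⟨u, vᵢ⟩ Dᵢ ∼ 0`
    (hlin : ∀ u : Fin 4 → ℚ, ∑ i, dotQ u (E1rays i) • D i = 0)
    -- normalization: a point, i.e. `V(σ)` for a maximal cone `σ`, has degree `1`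
    (hdeg : ∀ s : Finset (Fin 7), FanMaxCone E1rays s → deg (∏ i ∈ s, D i) = 1) :
    deg (((2 : ℚ)⁻¹ • ∑ i, D i ^ 2) * (D 1 * D 2)) = -2 ∧
    ¬ (∀ s : Finset (Fin 7), FanCone E1rays s → s.card = 2 →
        0 < deg (((2 : ℚ)⁻¹ • ∑ i, D i ^ 2) * ∏ i ∈ s, D i)) := by
  -- Stanley–Reisner zero products
  have hz012 : D 0 * (D 1 * D 2) = 0 := by
    have h := hSR {0,1,2} (ncone01 _ (by decide) (by decide))
    rw [show ({0,1,2} : Finset (Fin 7)) = insert 0 {1,2} from rfl,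
      Finset.prod_insert (by decide), Finset.prod_pair (by decide)] at h
    exact h
  have hz1234 : D 1 * D 2 * D 3 * D 4 = 0 := by
    have h := hSR {1,2,3,4} (ncone1234 _ (by decide) (by decide) (by decide) (by decide))
    rw [show ({1,2,3,4} : Finset (Fin 7)) = insert 1 (insert 2 (insert 3 {4})) from rfl,
      Finset.prod_insert (by decide), Finset.prod_insert (by decide),
      Finset.prod_pair (by decide)] at h
    linear_combination h
  have hz1256 : D 1 * D 2 * D 5 * D 6 = 0 := by
    have h := hSR {1,2,5,6} (ncone56 _ (by decide) (by decide))
    rw [show ({1,2,5,6} : Finset (Fin 7)) = insert 1 (insert 2 (insert 5 {6})) from rfl,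
      Finset.prod_insert (by decide), Finset.prod_insert (by decide),
      Finset.prod_pair (by decide)] at h
    linear_combination h
  -- degrees of the two relevant point classes
  have P : deg (D 1 * D 2 * D 4 * D 5) = 1 := by
    have h := hdeg {1,2,4,5} maxcone1245
    rw [show ({1,2,4,5} : Finset (Fin 7)) = insert 1 (insert 2 (insert 4 {5})) from rfl,
      Finset.prod_insert (by decide), Finset.prod_insert (by decide),
      Finset.prod_pair (by decide)] at h
    rw [show D 1 * D 2 * D 4 * D 5 = D 1 * (D 2 * (D 4 * D 5)) from by ring]
    exact h
  have Q : deg (D 1 * D 2 * D 4 * D 6) = 1 := by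
    have h := hdeg {1,2,4,6} maxcone1246
    rw [show ({1,2,4,6} : Finset (Fin 7)) = insert 1 (insert 2 (insert 4 {6})) from rfl,
      Finset.prod_insert (by decide), Finset.prod_insert (by decide),
      Finset.prod_pair (by decide)] at h
    rw [show D 1 * D 2 * D 4 * D 6 = D 1 * (D 2 * (D 4 * D 6)) from by ring]
    exact h
  -- linear relations
  have hL0 : D 0 + (D 4 + D 4) + D 5 - D 6 = 0 := by
    have h := hlin ![1,0,0,0]
    rw [Fin.sum_univ_seven, dQ0, dQ1, dQ2, dQ3, dQ4, dQ5, dQ6] at h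
    simp at h
    rw [two_smul] at h
    linear_combination h
  have hL1 : D 1 - D 4 + D 5 = 0 := by
    have h := hlin ![0,1,0,0]
    rw [Fin.sum_univ_seven, dQ0, dQ1, dQ2, dQ3, dQ4, dQ5, dQ6] at h
    simp at h
    linear_combination h
  have hL2 : D 2 - D 4 = 0 := by
    have h := hlin ![0,0,1,0]
    rw [Fin.sum_univ_seven, dQ0, dQ1, dQ2, dQ3, dQ4, dQ5, dQ6] at h
    simp at h
    linear_combination h
  have hL3 : D 3 - D 4 = 0 := by
    have h := hlin ![0,0,0,1]
    rw [Fin.sum_univ_seven, dQ0, dQ1, dQ2, dQ3, dQ4, dQ5, dQ6] at h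
    simp at h
    linear_combination h
  -- degrees of the seven monomials
  have g0 : deg (D 0 * D 0 * (D 1 * D 2)) = 0 := by
    rw [show D 0 * D 0 * (D 1 * D 2) = (0 : A) from by linear_combination D 0 * hz012]
    exact map_zero _
  have g3 : deg (D 3 * D 3 * (D 1 * D 2)) = 0 := by
    rw [show D 3 * D 3 * (D 1 * D 2) = (0 : A) from by
      linear_combination (D 1 * D 2 * D 3) * hL3 + hz1234]
    exact map_zero _
  have g4 : deg (D 4 * D 4 * (D 1 * D 2)) = 0 := by
    have e : deg (D 4 * D 4 * (D 1 * D 2) + D 4 * D 4 * (D 1 * D 2)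
        + D 1 * D 2 * D 4 * D 5 - D 1 * D 2 * D 4 * D 6) = deg 0 := by
      congr 1
      linear_combination (D 1 * D 2 * D 4) * hL0 - D 4 * hz012
    simp only [map_add, map_sub, map_zero] at e
    linarith
  have g5 : deg (D 5 * D 5 * (D 1 * D 2)) = -2 := by
    have e : deg (D 5 * D 5 * (D 1 * D 2)
        + (D 1 * D 2 * D 4 * D 5 + D 1 * D 2 * D 4 * D 5)) = deg 0 := by
      congr 1
      linear_combination (D 1 * D 2 * D 5) * hL0 - D 5 * hz012 + hz1256
    simp only [map_add, map_zero] at e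
    linarith
  have g6 : deg (D 6 * D 6 * (D 1 * D 2)) = 2 := by
    have e : deg (D 6 * D 6 * (D 1 * D 2)
        - (D 1 * D 2 * D 4 * D 6 + D 1 * D 2 * D 4 * D 6)) = deg 0 := by
      congr 1
      linear_combination (-(D 1 * D 2 * D 6)) * hL0 + D 6 * hz012 + hz1256
    simp only [map_add, map_sub, map_zero] at e
    linarith
  have g2 : deg (D 2 * D 2 * (D 1 * D 2)) = 0 := by
    have e : deg (D 2 * D 2 * (D 1 * D 2) - D 4 * D 4 * (D 1 * D 2)) = deg 0 := by
      congr 1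
      linear_combination (D 1 * D 2 * D 2 + D 1 * D 2 * D 4) * hL2
    simp only [map_sub, map_zero] at e
    linarith
  have u14 : deg (D 1 * D 1 * D 2 * D 4) = -1 := by
    have e : deg (D 1 * D 1 * D 2 * D 4 - D 4 * D 4 * (D 1 * D 2)
        + D 1 * D 2 * D 4 * D 5) = deg 0 := by
      congr 1
      linear_combination (D 1 * D 2 * D 4) * hL1
    simp only [map_add, map_sub, map_zero] at e
    linarith
  have u15 : deg (D 1 * D 1 * D 2 * D 5) = 3 := by
    have e : deg (D 1 * D 1 * D 2 * D 5 - D 1 * D 2 * D 4 * D 5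
        + D 5 * D 5 * (D 1 * D 2)) = deg 0 := by
      congr 1
      linear_combination (D 1 * D 2 * D 5) * hL1
    simp only [map_add, map_sub, map_zero] at e
    linarith
  have g1 : deg (D 1 * D 1 * (D 1 * D 2)) = -4 := by
    have e : deg (D 1 * D 1 * (D 1 * D 2) - D 1 * D 1 * D 2 * D 4
        + D 1 * D 1 * D 2 * D 5) = deg 0 := by
      congr 1
      linear_combination (D 1 * D 1 * D 2) * hL1
    simp only [map_add, map_sub, map_zero] at e
    linarith
  -- the main computation
  have main : deg (((2 : ℚ)⁻¹ • ∑ i, D i ^ 2) * (D 1 * D 2)) = -2 := by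
    rw [smul_mul_assoc, show (∑ i : Fin 7, D i ^ 2) * (D 1 * D 2)
        = D 0 * D 0 * (D 1 * D 2) + D 1 * D 1 * (D 1 * D 2) + D 2 * D 2 * (D 1 * D 2)
        + D 3 * D 3 * (D 1 * D 2) + D 4 * D 4 * (D 1 * D 2) + D 5 * D 5 * (D 1 * D 2)
        + D 6 * D 6 * (D 1 * D 2) from by rw [Fin.sum_univ_seven]; ring,
      map_smul]
    simp only [map_add]
    rw [g0, g1, g2, g3, g4, g5, g6]
    norm_num
  refine ⟨main, fun H => ?_⟩
  have h12 : FanCone E1rays {1,2} := ⟨{1,2,4,5}, maxcone1245, by decide⟩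
  have hlt := H {1,2} h12 (by decide)
  rw [Finset.prod_pair (by decide : (1 : Fin 7) ≠ 2)] at hlt
  linarith
end

section
/- Let X = X_Σ be the smooth toric Fano 4-fold G_1, where Σ is the complete fan in N ≅ Z^4 whose maximal cones are the cones over the facets of the convex hull of its minimal ray generators v_1 = e_1, v_2 = e_2, v_3 = e_3, v_4 = e_1 − e_2 − e_3, v_5 = e_4, v_6 = e_1 + e_2 + e_3 − e_4, v_7 = −e_1. Then ch_2(T_X) · V(⟨v_1, v_5⟩) = −1/2; in particular X is not 2-Fano. -/
/-!
The toric Fano 4-fold `G₁` of the (Batyrev) classification of smooth toric Fano 4-folds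
satisfies `ch₂(T_X) · V(⟨v1, v5⟩) = -(1/2`; in particular `X = X_Σ` is not 2-Fano.

Since Mathlib has no toric geometry, we model the situation faithfully and concretely:
* the fan `Σ` is the complete fan in `ℤ⁴ ⊗ ℚ` whose maximal cones are the cones over the
  facets of the convex hull of the minimal ray generators (a facet corresponds to a set `s`
  of rays lying on a hyperplane `⟨u, ·⟩ = 1` with all remaining rays strictly below it);
* the rational Chow ring of the associated smooth complete toric variety is presented, as a
  commutative `ℚ`-algebra, by the classes `D i` of the invariant divisors subject to the
  Stanley–Reisner relations and the linear relations `div(χᵘ) ∼ 0`, together with the degree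
  map `deg` sending the class of a point (the product of the divisors of a maximal cone) to 1;
* `ch₂(T_X) = ½ ∑ᵢ Dᵢ²`, the class of the invariant surface `V(⟨v_i, v_j⟩)` is `D i * D j`,
  and `X` is 2-Fano iff `ch₂(T_X) · S > 0` for every irreducible surface `S ⊆ X` (so in
  particular for every invariant surface).
-/

open Finset

/-- The minimal ray generators of the fan of the toric Fano 4-fold `G₁`:
`v₁ = e₁`, `v₂ = e₂`, `v₃ = e₃`, `v₄ = e₁ - e₂ - e₃`, `v₅ = e₄`, `v₆ = e₁ + e₂ + e₃ - e₄`, `v₇ = -e₁`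
(indexed here by `0, …, 6`). -/
def G1rays : Fin 7 → Fin 4 → ℚ :=
  ![![1,0,0,0], ![0,1,0,0], ![0,0,1,0], ![1,-1,-1,0], ![0,0,0,1], ![1,1,1,-1], ![-1,0,0,0]]


@[simp] lemma G1rays0' (h : (0:ℕ) < 7) : G1rays ⟨0, h⟩ = ![1,0,0,0] := rfl
@[simp] lemma G1rays1' (h : (1:ℕ) < 7) : G1rays ⟨1, h⟩ = ![0,1,0,0] := rfl
@[simp] lemma G1rays2' (h : (2:ℕ) < 7) : G1rays ⟨2, h⟩ = ![0,0,1,0] := rfl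
@[simp] lemma G1rays3' (h : (3:ℕ) < 7) : G1rays ⟨3, h⟩ = ![1,-1,-1,0] := rfl
@[simp] lemma G1rays4' (h : (4:ℕ) < 7) : G1rays ⟨4, h⟩ = ![0,0,0,1] := rfl
@[simp] lemma G1rays5' (h : (5:ℕ) < 7) : G1rays ⟨5, h⟩ = ![1,1,1,-1] := rfl
@[simp] lemma G1rays6' (h : (6:ℕ) < 7) : G1rays ⟨6, h⟩ = ![-1,0,0,0] := rfl
@[simp] lemma G1rays0 : G1rays 0 = ![1,0,0,0] := rfl
@[simp] lemma G1rays1 : G1rays 1 = ![0,1,0,0] := rfl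
@[simp] lemma G1rays2 : G1rays 2 = ![0,0,1,0] := rfl
@[simp] lemma G1rays3 : G1rays 3 = ![1,-1,-1,0] := rfl
@[simp] lemma G1rays4 : G1rays 4 = ![0,0,0,1] := rfl
@[simp] lemma G1rays5 : G1rays 5 = ![1,1,1,-1] := rfl
@[simp] lemma G1rays6 : G1rays 6 = ![-1,0,0,0] := rfl

theorem G1_ch2_V_eq_and_not_twoFano
    (A : Type*) [CommRing A] [Algebra ℚ A]
    -- `D i` = class of the invariant prime divisor `D_i = V(⟨v_i⟩)` in the rational Chow ring `A`
    (D : Fin 7 → A)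
    -- `deg` = the degree map on 0-cycle classes
    (deg : A →ₗ[ℚ] ℚ)
    -- Stanley–Reisner relations of the fan
    (hSR : ∀ s : Finset (Fin 7), ¬ FanCone G1rays s → ∏ i ∈ s, D i = 0)
    -- linear relations: `div(χᵘ) = ∑ᵢ ⟨u, vᵢ⟩ Dᵢ ∼ 0`
    (hlin : ∀ u : Fin 4 → ℚ, ∑ i, dotQ u (G1rays i) • D i = 0)
    -- normalization: a point, i.e. `V(σ)` for a maximal cone `σ`, has degree `1`
    (hdeg : ∀ s : Finset (Fin 7), FanMaxCone G1rays s → deg (∏ i ∈ s, D i) = 1) :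
    deg (((2 : ℚ)⁻¹ • ∑ i, D i ^ 2) * (D 0 * D 4)) = -(1/2) ∧
    ¬ (∀ s : Finset (Fin 7), FanCone G1rays s → s.card = 2 →
        0 < deg (((2 : ℚ)⁻¹ • ∑ i, D i ^ 2) * ∏ i ∈ s, D i)) := by
  -- linear relations
  have h6 : D 6 = D 0 + D 3 + D 5 := by
    have h := hlin ![1,0,0,0]
    simp [Fin.sum_univ_seven, dotQ, Fin.sum_univ_four] at h
    linear_combination -h
  have h1 : D 1 = D 3 - D 5 := by
    have h := hlin ![0,1,0,0]
    simp [Fin.sum_univ_seven, dotQ, Fin.sum_univ_four] at h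
    linear_combination h
  have h2 : D 2 = D 3 - D 5 := by
    have h := hlin ![0,0,1,0]
    simp [Fin.sum_univ_seven, dotQ, Fin.sum_univ_four] at h
    linear_combination h
  have h4 : D 4 = D 5 := by
    have h := hlin ![0,0,0,1]
    simp [Fin.sum_univ_seven, dotQ, Fin.sum_univ_four] at h
    linear_combination h
  -- Stanley–Reisner relations we need
  have s06 : D 0 * D 6 = 0 := by
    have h := hSR {0, 6} ?_
    · rwa [Finset.prod_insert (by decide), Finset.prod_singleton] at h
    · rintro ⟨t, ⟨_, u, hu1, hu2⟩, hsub⟩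
      have e0 := hu1 0 (hsub (by decide))
      have e6 := hu1 6 (hsub (by decide))
      simp [dotQ, Fin.sum_univ_four] at e0 e6
      linarith
  have s345 : D 3 * D 4 * D 5 = 0 := by
    have h := hSR {3, 4, 5} ?_
    · rwa [Finset.prod_insert (by decide), Finset.prod_insert (by decide),
        Finset.prod_singleton, ← mul_assoc] at h
    · rintro ⟨t, ⟨_, u, hu1, hu2⟩, hsub⟩
      have e3 := hu1 3 (hsub (by decide))
      have e4 := hu1 4 (hsub (by decide))
      have e5 := hu1 5 (hsub (by decide))
      simp [dotQ, Fin.sum_univ_four] at e3 e4 e5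
      by_cases h0 : (0 : Fin 7) ∈ t
      · have e0 := hu1 0 h0
        simp [dotQ, Fin.sum_univ_four] at e0
        linarith
      · have e0 := hu2 0 h0
        simp [dotQ, Fin.sum_univ_four] at e0
        linarith
  -- the two maximal cones we use
  have m0134 : FanMaxCone G1rays {0, 1, 3, 4} := by
    refine ⟨by decide, ![1,1,-1,1], ?_, ?_⟩
    · intro i hi
      fin_cases hi <;> simp [dotQ, Fin.sum_univ_four] <;> norm_num
    · intro j hj
      fin_cases j <;> first
        | exact absurd (by decide) hj
        | (simp [dotQ, Fin.sum_univ_four] <;> norm_num)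
  have m0145 : FanMaxCone G1rays {0, 1, 4, 5} := by
    refine ⟨by decide, ![1,1,0,1], ?_, ?_⟩
    · intro i hi
      fin_cases hi <;> simp [dotQ, Fin.sum_univ_four] <;> norm_num
    · intro j hj
      fin_cases j <;> first
        | exact absurd (by decide) hj
        | (simp [dotQ, Fin.sum_univ_four] <;> norm_num)
  have d0134 : deg (D 0 * (D 1 * (D 3 * D 4))) = 1 := by
    have h := hdeg _ m0134
    rwa [Finset.prod_insert (by decide), Finset.prod_insert (by decide),
      Finset.prod_insert (by decide), Finset.prod_singleton] at h
  have d0145 : deg (D 0 * (D 1 * (D 4 * D 5))) = 1 := by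
    have h := hdeg _ m0145
    rwa [Finset.prod_insert (by decide), Finset.prod_insert (by decide),
      Finset.prod_insert (by decide), Finset.prod_singleton] at h
  -- the key intersection-theoretic identity
  have hmain : (∑ i, D i ^ 2) * (D 0 * D 4)
      + (D 0 * (D 1 * (D 4 * D 5)) + D 0 * (D 1 * (D 4 * D 5))
        + D 0 * (D 1 * (D 4 * D 5)) + D 0 * (D 1 * (D 4 * D 5)) + D 0 * (D 1 * (D 4 * D 5)))
      = D 0 * (D 1 * (D 3 * D 4)) + D 0 * (D 1 * (D 3 * D 4))
        + D 0 * (D 1 * (D 3 * D 4)) + D 0 * (D 1 * (D 3 * D 4)) := by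
    rw [Fin.sum_univ_seven, h1, h2, h4, h6]
    rw [h6] at s06
    rw [h4] at s345
    linear_combination (2 * D 0 * D 5) * s06 + (7 * D 0) * s345
  have hdegmain : deg ((∑ i, D i ^ 2) * (D 0 * D 4)) = -1 := by
    have h := congrArg deg hmain
    simp only [map_add] at h
    rw [d0134, d0145] at h
    linarith
  have hfirst : deg (((2 : ℚ)⁻¹ • ∑ i, D i ^ 2) * (D 0 * D 4)) = -(1/2) := by
    rw [smul_mul_assoc, map_smul, hdegmain]
    norm_num
  refine ⟨hfirst, ?_⟩
  intro h
  have hc : FanCone G1rays {0, 4} := ⟨{0, 1, 3, 4}, m0134, by decide⟩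
  have h04 := h {0, 4} hc (by decide)
  rw [Finset.prod_insert (by decide), Finset.prod_singleton, hfirst] at h04
  norm_num at h04
end

section
/- Let X = X_Σ be the smooth toric Fano 4-fold H_1, where Σ is the complete fan in N ≅ Z^4 whose maximal cones are the cones over the facets of the convex hull of its minimal ray generators v_1 = e_1, v_2 = e_2, v_3 = e_3, v_4 = e_4, v_5 = 2e_1 − e_3 − e_4, v_6 = −e_1 − e_2, v_7 = −e_2, v_8 = e_1 + e_2. Then ch_2(T_X) · V(⟨v_3, v_4⟩) = −3/2; in particular X is not 2-Fano. -/
/-!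
The toric Fano 4-fold `H₁` of the (Batyrev) classification of smooth toric Fano 4-folds
satisfies `ch₂(T_X) · V(⟨v3, v4⟩) = -(3/2`; in particular `X = X_Σ` is not 2-Fano.

Since Mathlib has no toric geometry, we model the situation faithfully and concretely:
* the fan `Σ` is the complete fan in `ℤ⁴ ⊗ ℚ` whose maximal cones are the cones over the
  facets of the convex hull of the minimal ray generators (a facet corresponds to a set `s`
  of rays lying on a hyperplane `⟨u, ·⟩ = 1` with all remaining rays strictly below it);
* the rational Chow ring of the associated smooth complete toric variety is presented, as a
  commutative `ℚ`-algebra, by the classes `D i` of the invariant divisors subject to the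
  Stanley–Reisner relations and the linear relations `div(χᵘ) ∼ 0`, together with the degree
  map `deg` sending the class of a point (the product of the divisors of a maximal cone) to 1;
* `ch₂(T_X) = ½ ∑ᵢ Dᵢ²`, the class of the invariant surface `V(⟨v_i, v_j⟩)` is `D i * D j`,
  and `X` is 2-Fano iff `ch₂(T_X) · S > 0` for every irreducible surface `S ⊆ X` (so in
  particular for every invariant surface).
-/

open Finset

/-- The minimal ray generators of the fan of the toric Fano 4-fold `H₁`:
`v₁ = e₁`, `v₂ = e₂`, `v₃ = e₃`, `v₄ = e₄`, `v₅ = 2e₁ - e₃ - e₄`, `v₆ = -e₁ - e₂`, `v₇ = -e₂`, `v₈ = e₁ + e₂`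
(indexed here by `0, …, 7`). -/
def H1rays : Fin 8 → Fin 4 → ℚ :=
  ![![1,0,0,0], ![0,1,0,0], ![0,0,1,0], ![0,0,0,1], ![2,0,-1,-1], ![-1,-1,0,0], ![0,-1,0,0], ![1,1,0,0]]

lemma H1r0 : H1rays 0 = ![1,0,0,0] := rfl
lemma H1r1 : H1rays 1 = ![0,1,0,0] := rfl
lemma H1r2 : H1rays 2 = ![0,0,1,0] := rfl
lemma H1r3 : H1rays 3 = ![0,0,0,1] := rfl
lemma H1r4 : H1rays 4 = ![2,0,-1,-1] := rfl
lemma H1r5 : H1rays 5 = ![-1,-1,0,0] := rfl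
lemma H1r6 : H1rays 6 = ![0,-1,0,0] := rfl
lemma H1r7 : H1rays 7 = ![1,1,0,0] := rfl

theorem H1_ch2_V_eq_and_not_twoFano
    (A : Type*) [CommRing A] [Algebra ℚ A]
    -- `D i` = class of the invariant prime divisor `D_i = V(⟨v_i⟩)` in the rational Chow ring `A`
    (D : Fin 8 → A)
    -- `deg` = the degree map on 0-cycle classes
    (deg : A →ₗ[ℚ] ℚ)
    -- Stanley–Reisner relations of the fan
    (hSR : ∀ s : Finset (Fin 8), ¬ FanCone H1rays s → ∏ i ∈ s, D i = 0)
    -- linear relations: `div(χᵘ) = ∑ᵢ ⟨u, vᵢ⟩ Dᵢ ∼ 0`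
    (hlin : ∀ u : Fin 4 → ℚ, ∑ i, dotQ u (H1rays i) • D i = 0)
    -- normalization: a point, i.e. `V(σ)` for a maximal cone `σ`, has degree `1`
    (hdeg : ∀ s : Finset (Fin 8), FanMaxCone H1rays s → deg (∏ i ∈ s, D i) = 1) :
    deg (((2 : ℚ)⁻¹ • ∑ i, D i ^ 2) * (D 2 * D 3)) = -(3/2) ∧
    ¬ (∀ s : Finset (Fin 8), FanCone H1rays s → s.card = 2 →
        0 < deg (((2 : ℚ)⁻¹ • ∑ i, D i ^ 2) * ∏ i ∈ s, D i)) := by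
  -- the linear relations for `u = e₁, e₂, e₃, e₄`
  have h0 := hlin ![1,0,0,0]
  have h1 := hlin ![0,1,0,0]
  have h2 := hlin ![0,0,1,0]
  have h3 := hlin ![0,0,0,1]
  rw [Fin.sum_univ_eight] at h0 h1 h2 h3
  norm_num [dotQ, Fin.sum_univ_four, H1r0, H1r1, H1r2, H1r3, H1r4, H1r5, H1r6, H1r7, Matrix.cons_val_two, Matrix.cons_val_three, Matrix.vecHead, Matrix.vecTail]
    at h0 h1 h2 h3
  rw [two_smul] at h0
  have hD0 : D 0 = D 5 - D 7 - (D 4 + D 4) := by linear_combination h0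
  have hD1 : D 1 = D 5 + D 6 - D 7 := by linear_combination h1
  have hD2 : D 2 = D 4 := by linear_combination h2
  have hD3 : D 3 = D 4 := by linear_combination h3
  -- Stanley–Reisner relations for the minimal non-faces we need
  have hN01 : ¬ FanCone H1rays ({0,1} : Finset (Fin 8)) := by
    rintro ⟨t, ⟨_, u, hu1, hu2⟩, hst⟩
    have hle : ∀ j, dotQ u (H1rays j) ≤ 1 := fun j => by
      by_cases hj : j ∈ t
      · exact le_of_eq (hu1 j hj)
      · exact le_of_lt (hu2 j hj)
    have e0 := hu1 0 (hst (by decide))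
    have e1 := hu1 1 (hst (by decide))
    have e7 := hle 7
    rw [H1r0] at e0; rw [H1r1] at e1; rw [H1r7] at e7
    simp [dotQ, Fin.sum_univ_four] at e0 e1 e7
    linarith
  have hN16 : ¬ FanCone H1rays ({1,6} : Finset (Fin 8)) := by
    rintro ⟨t, ⟨_, u, hu1, hu2⟩, hst⟩
    have e1 := hu1 1 (hst (by decide))
    have e6 := hu1 6 (hst (by decide))
    rw [H1r1] at e1; rw [H1r6] at e6
    simp [dotQ, Fin.sum_univ_four] at e1 e6
    linarith
  have hN57 : ¬ FanCone H1rays ({5,7} : Finset (Fin 8)) := by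
    rintro ⟨t, ⟨_, u, hu1, hu2⟩, hst⟩
    have e5 := hu1 5 (hst (by decide))
    have e7 := hu1 7 (hst (by decide))
    rw [H1r5] at e5; rw [H1r7] at e7
    simp [dotQ, Fin.sum_univ_four] at e5 e7
    linarith
  have hN67 : ¬ FanCone H1rays ({6,7} : Finset (Fin 8)) := by
    rintro ⟨t, ⟨_, u, hu1, hu2⟩, hst⟩
    have hle : ∀ j, dotQ u (H1rays j) ≤ 1 := fun j => by
      by_cases hj : j ∈ t
      · exact le_of_eq (hu1 j hj)
      · exact le_of_lt (hu2 j hj)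
    have e6 := hu1 6 (hst (by decide))
    have e7 := hu1 7 (hst (by decide))
    have e0 := hle 0
    rw [H1r6] at e6; rw [H1r7] at e7; rw [H1r0] at e0
    simp [dotQ, Fin.sum_univ_four] at e6 e7 e0
    linarith
  have hN234 : ¬ FanCone H1rays ({2,3,4} : Finset (Fin 8)) := by
    rintro ⟨t, ⟨_, u, hu1, hu2⟩, hst⟩
    have hle : ∀ j, dotQ u (H1rays j) ≤ 1 := fun j => by
      by_cases hj : j ∈ t
      · exact le_of_eq (hu1 j hj)
      · exact le_of_lt (hu2 j hj)
    have e2 := hu1 2 (hst (by decide))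
    have e3 := hu1 3 (hst (by decide))
    have e4 := hu1 4 (hst (by decide))
    have e0 := hle 0
    rw [H1r2] at e2; rw [H1r3] at e3; rw [H1r4] at e4; rw [H1r0] at e0
    simp [dotQ, Fin.sum_univ_four] at e2 e3 e4 e0
    linarith
  have hZ01 : D 0 * D 1 = 0 := by
    have := hSR {0,1} hN01; rwa [Finset.prod_pair (by decide)] at this
  have hZ16 : D 1 * D 6 = 0 := by
    have := hSR {1,6} hN16; rwa [Finset.prod_pair (by decide)] at this
  have hZ57 : D 5 * D 7 = 0 := by
    have := hSR {5,7} hN57; rwa [Finset.prod_pair (by decide)] at this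
  have hZ67 : D 6 * D 7 = 0 := by
    have := hSR {6,7} hN67; rwa [Finset.prod_pair (by decide)] at this
  have hZ234 : D 2 * (D 3 * D 4) = 0 := by
    have := hSR {2,3,4} hN234
    rwa [Finset.prod_insert (by decide), Finset.prod_pair (by decide)] at this
  simp only [hD0, hD1, hD2, hD3] at hZ01 hZ16 hZ57 hZ67 hZ234
  -- the maximal cone `{2,3,5,6}` and the degree of its point class
  have hmax : FanMaxCone H1rays ({2,3,5,6} : Finset (Fin 8)) := by
    refine ⟨by decide, ![0,-1,1,1], fun i hi => ?_, fun j hj => ?_⟩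
    · simp only [Finset.mem_insert, Finset.mem_singleton] at hi
      rcases hi with rfl | rfl | rfl | rfl
      · rw [H1r2]; norm_num [dotQ, Fin.sum_univ_four, Matrix.cons_val_two, Matrix.cons_val_three, Matrix.vecHead, Matrix.vecTail]
      · rw [H1r3]; norm_num [dotQ, Fin.sum_univ_four, Matrix.cons_val_two, Matrix.cons_val_three, Matrix.vecHead, Matrix.vecTail]
      · rw [H1r5]; norm_num [dotQ, Fin.sum_univ_four, Matrix.cons_val_two, Matrix.cons_val_three, Matrix.vecHead, Matrix.vecTail]
      · rw [H1r6]; norm_num [dotQ, Fin.sum_univ_four, Matrix.cons_val_two, Matrix.cons_val_three, Matrix.vecHead, Matrix.vecTail]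
    · have hall : ∀ k : Fin 8, k = 0 ∨ k = 1 ∨ k = 2 ∨ k = 3 ∨ k = 4 ∨ k = 5 ∨ k = 6 ∨ k = 7 := by
        decide
      rcases hall j with rfl | rfl | rfl | rfl | rfl | rfl | rfl | rfl
      · rw [H1r0]; norm_num [dotQ, Fin.sum_univ_four, Matrix.cons_val_two, Matrix.cons_val_three, Matrix.vecHead, Matrix.vecTail]
      · rw [H1r1]; norm_num [dotQ, Fin.sum_univ_four, Matrix.cons_val_two, Matrix.cons_val_three, Matrix.vecHead, Matrix.vecTail]
      · exact absurd (by decide) hj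
      · exact absurd (by decide) hj
      · rw [H1r4]; norm_num [dotQ, Fin.sum_univ_four, Matrix.cons_val_two, Matrix.cons_val_three, Matrix.vecHead, Matrix.vecTail]
      · exact absurd (by decide) hj
      · exact absurd (by decide) hj
      · rw [H1r7]; norm_num [dotQ, Fin.sum_univ_four, Matrix.cons_val_two, Matrix.cons_val_three, Matrix.vecHead, Matrix.vecTail]
  have hP : deg (D 2 * (D 3 * (D 5 * D 6))) = 1 := by
    have := hdeg {2,3,5,6} hmax
    rwa [Finset.prod_insert (by decide), Finset.prod_insert (by decide),
      Finset.prod_pair (by decide)] at this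
  -- the key intersection-theoretic identity
  have key : (∑ i, D i ^ 2) * (D 2 * D 3) =
      -(D 2 * (D 3 * (D 5 * D 6)) + D 2 * (D 3 * (D 5 * D 6)) + D 2 * (D 3 * (D 5 * D 6))) := by
    rw [Fin.sum_univ_eight]
    simp only [hD0, hD1, hD2, hD3]
    linear_combination (3 * (D 4 * D 4)) * hZ01 + (2 * (D 4 * D 4)) * hZ16 +
      (2 * (D 4 * D 4)) * hZ57 + (3 * (D 4 * D 4)) * hZ67 +
      (7 * D 4 + 2 * D 5 + 6 * D 6 - 2 * D 7) * hZ234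
  have E : deg (((2 : ℚ)⁻¹ • ∑ i, D i ^ 2) * (D 2 * D 3)) = -(3/2) := by
    rw [smul_mul_assoc, map_smul, key, map_neg, map_add, map_add, hP]
    norm_num
  refine ⟨E, fun H => ?_⟩
  have hc : FanCone H1rays ({2,3} : Finset (Fin 8)) := ⟨{2,3,5,6}, hmax, by decide⟩
  have := H {2,3} hc (by decide)
  rw [Finset.prod_pair (by decide), E] at this
  norm_num at this
end

section
/- Let X = X_Σ be the smooth toric Fano 4-fold I_1, where Σ is the complete fan in N ≅ Z^4 whose maximal cones are the cones over the facets of the convex hull of its minimal ray generators v_1 = e_1, v_2 = −e_1 + e_3, v_3 = e_3, v_4 = e_4, v_5 = −2e_2 + e_3 − e_4, v_6 = e_2 − e_3, v_7 = e_2, v_8 = −e_2 + e_3. Then ch_2(T_X) · V(⟨v_1, v_4⟩) = −3/2; in particular X is not 2-Fano. -/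
/-!
The toric Fano 4-fold `I₁` of the (Batyrev) classification of smooth toric Fano 4-folds
satisfies `ch₂(T_X) · V(⟨v1, v4⟩) = -(3/2`; in particular `X = X_Σ` is not 2-Fano.

Since Mathlib has no toric geometry, we model the situation faithfully and concretely:
* the fan `Σ` is the complete fan in `ℤ⁴ ⊗ ℚ` whose maximal cones are the cones over the
  facets of the convex hull of the minimal ray generators (a facet corresponds to a set `s`
  of rays lying on a hyperplane `⟨u, ·⟩ = 1` with all remaining rays strictly below it);
* the rational Chow ring of the associated smooth complete toric variety is presented, as a
  commutative `ℚ`-algebra, by the classes `D i` of the invariant divisors subject to the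
  Stanley–Reisner relations and the linear relations `div(χᵘ) ∼ 0`, together with the degree
  map `deg` sending the class of a point (the product of the divisors of a maximal cone) to 1;
* `ch₂(T_X) = ½ ∑ᵢ Dᵢ²`, the class of the invariant surface `V(⟨v_i, v_j⟩)` is `D i * D j`,
  and `X` is 2-Fano iff `ch₂(T_X) · S > 0` for every irreducible surface `S ⊆ X` (so in
  particular for every invariant surface).
-/

open Finset

/-- The minimal ray generators of the fan of the toric Fano 4-fold `I₁`:
`v₁ = e₁`, `v₂ = -e₁ + e₃`, `v₃ = e₃`, `v₄ = e₄`, `v₅ = -2e₂ + e₃ - e₄`, `v₆ = e₂ - e₃`, `v₇ = e₂`, `v₈ = -e₂ + e₃`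
(indexed here by `0, …, 7`). -/
def I1rays : Fin 8 → Fin 4 → ℚ :=
  ![![1,0,0,0], ![-1,0,1,0], ![0,0,1,0], ![0,0,0,1], ![0,-2,1,-1], ![0,1,-1,0], ![0,1,0,0], ![0,-1,1,0]]

lemma dotQ_eval (u : Fin 4 → ℚ) (a b c d : ℚ) :
    dotQ u ![a,b,c,d] = u 0 * a + u 1 * b + u 2 * c + u 3 * d := by
  simp [dotQ, Fin.sum_univ_four]
lemma I1r0 : I1rays 0 = ![1,0,0,0] := rfl
lemma I1r1 : I1rays 1 = ![-1,0,1,0] := rfl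
lemma I1r2 : I1rays 2 = ![0,0,1,0] := rfl
lemma I1r3 : I1rays 3 = ![0,0,0,1] := rfl
lemma I1r4 : I1rays 4 = ![0,-2,1,-1] := rfl
lemma I1r5 : I1rays 5 = ![0,1,-1,0] := rfl
lemma I1r6 : I1rays 6 = ![0,1,0,0] := rfl
lemma I1r7 : I1rays 7 = ![0,-1,1,0] := rfl

lemma I1mc0237 : FanMaxCone I1rays {0,2,3,7} := by
  refine ⟨by decide, ![1,0,1,1], ?_, ?_⟩
  · intro i hi; fin_cases hi <;>
      norm_num [I1r0, I1r1, I1r2, I1r3, I1r4, I1r5, I1r6, I1r7, dotQ_eval,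
        Matrix.cons_val_two, Matrix.cons_val_three, Matrix.vecHead, Matrix.vecTail]
  · intro j hj; fin_cases j <;> simp_all <;>
      norm_num [I1r0, I1r1, I1r2, I1r3, I1r4, I1r5, I1r6, I1r7, dotQ_eval,
        Matrix.cons_val_two, Matrix.cons_val_three, Matrix.vecHead, Matrix.vecTail]
lemma I1mc0345 : FanMaxCone I1rays {0,3,4,5} := by
  refine ⟨by decide, ![1,-3,-4,1], ?_, ?_⟩
  · intro i hi; fin_cases hi <;>
      norm_num [I1r0, I1r1, I1r2, I1r3, I1r4, I1r5, I1r6, I1r7, dotQ_eval,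
        Matrix.cons_val_two, Matrix.cons_val_three, Matrix.vecHead, Matrix.vecTail]
  · intro j hj; fin_cases j <;> simp_all <;>
      norm_num [I1r0, I1r1, I1r2, I1r3, I1r4, I1r5, I1r6, I1r7, dotQ_eval,
        Matrix.cons_val_two, Matrix.cons_val_three, Matrix.vecHead, Matrix.vecTail]
lemma I1mc0347 : FanMaxCone I1rays {0,3,4,7} := by
  refine ⟨by decide, ![1,-1,0,1], ?_, ?_⟩
  · intro i hi; fin_cases hi <;>
      norm_num [I1r0, I1r1, I1r2, I1r3, I1r4, I1r5, I1r6, I1r7, dotQ_eval,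
        Matrix.cons_val_two, Matrix.cons_val_three, Matrix.vecHead, Matrix.vecTail]
  · intro j hj; fin_cases j <;> simp_all <;>
      norm_num [I1r0, I1r1, I1r2, I1r3, I1r4, I1r5, I1r6, I1r7, dotQ_eval,
        Matrix.cons_val_two, Matrix.cons_val_three, Matrix.vecHead, Matrix.vecTail]
lemma I1mc0356 : FanMaxCone I1rays {0,3,5,6} := by
  refine ⟨by decide, ![1,1,0,1], ?_, ?_⟩
  · intro i hi; fin_cases hi <;>
      norm_num [I1r0, I1r1, I1r2, I1r3, I1r4, I1r5, I1r6, I1r7, dotQ_eval,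
        Matrix.cons_val_two, Matrix.cons_val_three, Matrix.vecHead, Matrix.vecTail]
  · intro j hj; fin_cases j <;> simp_all <;>
      norm_num [I1r0, I1r1, I1r2, I1r3, I1r4, I1r5, I1r6, I1r7, dotQ_eval,
        Matrix.cons_val_two, Matrix.cons_val_three, Matrix.vecHead, Matrix.vecTail]

lemma dot_le_of_cone {t : Finset (Fin 8)} {u : Fin 4 → ℚ}
    (h1 : ∀ i ∈ t, dotQ u (I1rays i) = 1) (h2 : ∀ j ∉ t, dotQ u (I1rays j) < 1) :
    ∀ j : Fin 8, dotQ u (I1rays j) ≤ 1 := by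
  intro j; by_cases hj : j ∈ t
  · exact le_of_eq (h1 j hj)
  · exact le_of_lt (h2 j hj)

lemma I1nc01 : ¬ FanCone I1rays {0,1} := by
  rintro ⟨t, ⟨-, u, h1, h2⟩, hsub⟩
  have e0 := h1 0 (hsub (by decide))
  have e1 := h1 1 (hsub (by decide))
  have l2 := dot_le_of_cone h1 h2 2
  rw [I1r0, dotQ_eval] at e0; rw [I1r1, dotQ_eval] at e1; rw [I1r2, dotQ_eval] at l2
  linarith
lemma I1nc25 : ¬ FanCone I1rays {2,5} := by
  rintro ⟨t, ⟨-, u, h1, h2⟩, hsub⟩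
  have e2 := h1 2 (hsub (by decide))
  have e5 := h1 5 (hsub (by decide))
  have l6 := dot_le_of_cone h1 h2 6
  rw [I1r2, dotQ_eval] at e2; rw [I1r5, dotQ_eval] at e5; rw [I1r6, dotQ_eval] at l6
  linarith
lemma I1nc57 : ¬ FanCone I1rays {5,7} := by
  rintro ⟨t, ⟨-, u, h1, h2⟩, hsub⟩
  have e5 := h1 5 (hsub (by decide))
  have e7 := h1 7 (hsub (by decide))
  rw [I1r5, dotQ_eval] at e5; rw [I1r7, dotQ_eval] at e7
  linarith
lemma I1nc67 : ¬ FanCone I1rays {6,7} := by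
  rintro ⟨t, ⟨-, u, h1, h2⟩, hsub⟩
  have e6 := h1 6 (hsub (by decide))
  have e7 := h1 7 (hsub (by decide))
  have l2 := dot_le_of_cone h1 h2 2
  rw [I1r6, dotQ_eval] at e6; rw [I1r7, dotQ_eval] at e7; rw [I1r2, dotQ_eval] at l2
  linarith
lemma I1nc0234 : ¬ FanCone I1rays {0,2,3,4} := by
  rintro ⟨t, ⟨-, u, h1, h2⟩, hsub⟩
  have e0 := h1 0 (hsub (by decide))
  have e2 := h1 2 (hsub (by decide))
  have e3 := h1 3 (hsub (by decide))
  have e4 := h1 4 (hsub (by decide))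
  have l7 := dot_le_of_cone h1 h2 7
  rw [I1r0, dotQ_eval] at e0; rw [I1r2, dotQ_eval] at e2; rw [I1r3, dotQ_eval] at e3
  rw [I1r4, dotQ_eval] at e4; rw [I1r7, dotQ_eval] at l7
  linarith
lemma I1nc0346 : ¬ FanCone I1rays {0,3,4,6} := by
  rintro ⟨t, ⟨-, u, h1, h2⟩, hsub⟩
  have e0 := h1 0 (hsub (by decide))
  have e3 := h1 3 (hsub (by decide))
  have e4 := h1 4 (hsub (by decide))
  have e6 := h1 6 (hsub (by decide))
  have l2 := dot_le_of_cone h1 h2 2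
  rw [I1r0, dotQ_eval] at e0; rw [I1r3, dotQ_eval] at e3; rw [I1r4, dotQ_eval] at e4
  rw [I1r6, dotQ_eval] at e6; rw [I1r2, dotQ_eval] at l2
  linarith

theorem I1_ch2_V_eq_and_not_twoFano
    (A : Type*) [CommRing A] [Algebra ℚ A]
    -- `D i` = class of the invariant prime divisor `D_i = V(⟨v_i⟩)` in the rational Chow ring `A`
    (D : Fin 8 → A)
    -- `deg` = the degree map on 0-cycle classes
    (deg : A →ₗ[ℚ] ℚ)
    -- Stanley–Reisner relations of the fan
    (hSR : ∀ s : Finset (Fin 8), ¬ FanCone I1rays s → ∏ i ∈ s, D i = 0)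
    -- linear relations: `div(χᵘ) = ∑ᵢ ⟨u, vᵢ⟩ Dᵢ ∼ 0`
    (hlin : ∀ u : Fin 4 → ℚ, ∑ i, dotQ u (I1rays i) • D i = 0)
    -- normalization: a point, i.e. `V(σ)` for a maximal cone `σ`, has degree `1`
    (hdeg : ∀ s : Finset (Fin 8), FanMaxCone I1rays s → deg (∏ i ∈ s, D i) = 1) :
    deg (((2 : ℚ)⁻¹ • ∑ i, D i ^ 2) * (D 0 * D 3)) = -(3/2) ∧
    ¬ (∀ s : Finset (Fin 8), FanCone I1rays s → s.card = 2 →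
        0 < deg (((2 : ℚ)⁻¹ • ∑ i, D i ^ 2) * ∏ i ∈ s, D i)) := by
  have r1 : D 0 = D 1 := by
    have h := hlin ![1,0,0,0]
    simp only [Fin.sum_univ_eight, I1r0, I1r1, I1r2, I1r3, I1r4, I1r5, I1r6, I1r7, dotQ_eval] at h
    norm_num [Algebra.smul_def, map_neg, map_one, map_zero, map_ofNat,
      Matrix.cons_val_two, Matrix.cons_val_three, Matrix.vecHead, Matrix.vecTail] at h
    linear_combination h
  have r5 : D 3 = D 4 := by
    have h := hlin ![0,0,0,1]
    simp only [Fin.sum_univ_eight, I1r0, I1r1, I1r2, I1r3, I1r4, I1r5, I1r6, I1r7, dotQ_eval] at h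
    norm_num [Algebra.smul_def, map_neg, map_one, map_zero, map_ofNat,
      Matrix.cons_val_two, Matrix.cons_val_three, Matrix.vecHead, Matrix.vecTail] at h
    linear_combination h
  have r3 : D 1 + D 2 + D 4 - D 5 + D 7 = 0 := by
    have h := hlin ![0,0,1,0]
    simp only [Fin.sum_univ_eight, I1r0, I1r1, I1r2, I1r3, I1r4, I1r5, I1r6, I1r7, dotQ_eval] at h
    norm_num [Algebra.smul_def, map_neg, map_one, map_zero, map_ofNat,
      Matrix.cons_val_two, Matrix.cons_val_three, Matrix.vecHead, Matrix.vecTail] at h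
    linear_combination h
  have r4 : 2 * D 4 - D 5 - D 6 + D 7 = 0 := by
    have h := hlin ![0,-1,0,0]
    simp only [Fin.sum_univ_eight, I1r0, I1r1, I1r2, I1r3, I1r4, I1r5, I1r6, I1r7, dotQ_eval] at h
    norm_num [Algebra.smul_def, map_neg, map_one, map_zero, map_ofNat,
      Matrix.cons_val_two, Matrix.cons_val_three, Matrix.vecHead, Matrix.vecTail] at h
    linear_combination h
  have z01 : D 0 * D 1 = 0 := by
    have h := hSR {0,1} I1nc01
    rwa [Finset.prod_pair (by decide)] at h
  have z25 : D 2 * D 5 = 0 := by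
    have h := hSR {2,5} I1nc25
    rwa [Finset.prod_pair (by decide)] at h
  have z57 : D 5 * D 7 = 0 := by
    have h := hSR {5,7} I1nc57
    rwa [Finset.prod_pair (by decide)] at h
  have z67 : D 6 * D 7 = 0 := by
    have h := hSR {6,7} I1nc67
    rwa [Finset.prod_pair (by decide)] at h
  have z0234 : D 0 * (D 2 * (D 3 * D 4)) = 0 := by
    have h := hSR {0,2,3,4} I1nc0234
    rwa [Finset.prod_insert (by decide), Finset.prod_insert (by decide),
      Finset.prod_pair (by decide)] at h
  have z0346 : D 0 * (D 3 * (D 4 * D 6)) = 0 := by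
    have h := hSR {0,3,4,6} I1nc0346
    rwa [Finset.prod_insert (by decide), Finset.prod_insert (by decide),
      Finset.prod_pair (by decide)] at h
  have d0237 : deg (D 0 * (D 2 * (D 3 * D 7))) = 1 := by
    have h := hdeg {0,2,3,7} I1mc0237
    rwa [Finset.prod_insert (by decide), Finset.prod_insert (by decide),
      Finset.prod_pair (by decide)] at h
  have d0345 : deg (D 0 * (D 3 * (D 4 * D 5))) = 1 := by
    have h := hdeg {0,3,4,5} I1mc0345
    rwa [Finset.prod_insert (by decide), Finset.prod_insert (by decide),
      Finset.prod_pair (by decide)] at h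
  have d0347 : deg (D 0 * (D 3 * (D 4 * D 7))) = 1 := by
    have h := hdeg {0,3,4,7} I1mc0347
    rwa [Finset.prod_insert (by decide), Finset.prod_insert (by decide),
      Finset.prod_pair (by decide)] at h
  have d0356 : deg (D 0 * (D 3 * (D 5 * D 6))) = 1 := by
    have h := hdeg {0,3,5,6} I1mc0356
    rwa [Finset.prod_insert (by decide), Finset.prod_insert (by decide),
      Finset.prod_pair (by decide)] at h
  have key : (2:ℚ) • ((∑ i, D i ^ 2) * (D 0 * D 3)) =
      (-4:ℚ) • (D 0 * (D 2 * (D 3 * D 7))) + (6:ℚ) • (D 0 * (D 3 * (D 4 * D 5)))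
      + (-4:ℚ) • (D 0 * (D 3 * (D 4 * D 7))) + (-4:ℚ) • (D 0 * (D 3 * (D 5 * D 6))) := by
    rw [Fin.sum_univ_eight]
    simp only [Algebra.smul_def, map_neg, map_ofNat]
    linear_combination (2*D 0^2*D 3) * r1 + (2*D 0*D 3^2 + 2*D 0*D 3*D 4) * r5
      + (2*D 0*D 2*D 3 + 2*D 0*D 3*D 7) * r3
      + (2*D 0*D 3*D 4 - 2*D 0*D 3*D 5 - 2*D 0*D 3*D 6) * r4
      + (2*D 0*D 3 + 2*D 1*D 3 - 2*D 2*D 3 - 2*D 3*D 7) * z01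
      + (2*D 0*D 3) * z25 + (4*D 0*D 3) * z57 + (2*D 0*D 3) * z67
      + (-2 : A) * z0234 + (6 : A) * z0346
  have hdval : deg ((∑ i, D i ^ 2) * (D 0 * D 3)) = -3 := by
    have h := congrArg deg key
    rw [map_smul, map_add, map_add, map_add, map_smul, map_smul, map_smul, map_smul,
      d0237, d0345, d0347, d0356] at h
    simp only [smul_eq_mul] at h
    linarith
  have part1 : deg (((2 : ℚ)⁻¹ • ∑ i, D i ^ 2) * (D 0 * D 3)) = -(3/2) := by
    rw [smul_mul_assoc, map_smul, hdval]
    norm_num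
  refine ⟨part1, ?_⟩
  intro H
  have h2 := H {0,3} ⟨{0,3,4,5}, I1mc0345, by decide⟩ (by decide)
  rw [Finset.prod_pair (by decide), part1] at h2
  norm_num at h2
end

section
/- Let X = X_Σ be the smooth toric Fano 4-fold J_1, where Σ is the complete fan in N ≅ Z^4 whose maximal cones are the cones over the facets of the convex hull of its minimal ray generators v_1 = e_1, v_2 = e_2, v_3 = e_3, v_4 = e_4, v_5 = −e_3 − e_4, v_6 = e_1 + e_2 + e_3, v_7 = e_1 + e_2 + 2e_3, v_8 = −e_1 − e_2 − e_3. Then ch_2(T_X) · V(⟨v_1, v_3⟩) = −1; in particular X is not 2-Fano. -/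
/-!
The toric Fano 4-fold `J₁` of the (Batyrev) classification of smooth toric Fano 4-folds
satisfies `ch₂(T_X) · V(⟨v1, v3⟩) = -1`; in particular `X = X_Σ` is not 2-Fano.

Since Mathlib has no toric geometry, we model the situation faithfully and concretely:
* the fan `Σ` is the complete fan in `ℤ⁴ ⊗ ℚ` whose maximal cones are the cones over the
  facets of the convex hull of the minimal ray generators (a facet corresponds to a set `s`
  of rays lying on a hyperplane `⟨u, ·⟩ = 1` with all remaining rays strictly below it);
* the rational Chow ring of the associated smooth complete toric variety is presented, as a
  commutative `ℚ`-algebra, by the classes `D i` of the invariant divisors subject to the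
  Stanley–Reisner relations and the linear relations `div(χᵘ) ∼ 0`, together with the degree
  map `deg` sending the class of a point (the product of the divisors of a maximal cone) to 1;
* `ch₂(T_X) = ½ ∑ᵢ Dᵢ²`, the class of the invariant surface `V(⟨v_i, v_j⟩)` is `D i * D j`,
  and `X` is 2-Fano iff `ch₂(T_X) · S > 0` for every irreducible surface `S ⊆ X` (so in
  particular for every invariant surface).
-/

open Finset

/-- The minimal ray generators of the fan of the toric Fano 4-fold `J₁`:
`v₁ = e₁`, `v₂ = e₂`, `v₃ = e₃`, `v₄ = e₄`, `v₅ = -e₃ - e₄`, `v₆ = e₁ + e₂ + e₃`, `v₇ = e₁ + e₂ + 2e₃`, `v₈ = -e₁ - e₂ - e₃`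
(indexed here by `0, …, 7`). -/
def J1rays : Fin 8 → Fin 4 → ℚ :=
  ![![1,0,0,0], ![0,1,0,0], ![0,0,1,0], ![0,0,0,1], ![0,0,-1,-1], ![1,1,1,0], ![1,1,2,0], ![-1,-1,-1,0]]
lemma J1r0 : J1rays 0 = ![1,0,0,0] := rfl
lemma J1r1 : J1rays 1 = ![0,1,0,0] := rfl
lemma J1r2 : J1rays 2 = ![0,0,1,0] := rfl
lemma J1r3 : J1rays 3 = ![0,0,0,1] := rfl
lemma J1r4 : J1rays 4 = ![0,0,-1,-1] := rfl
lemma J1r5 : J1rays 5 = ![1,1,1,0] := rfl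
lemma J1r6 : J1rays 6 = ![1,1,2,0] := rfl
lemma J1r7 : J1rays 7 = ![-1,-1,-1,0] := rfl

lemma J1mc0236 : FanMaxCone J1rays {0,2,3,6} := by
  refine ⟨by decide, ![1,-2,1,1], fun i hi => ?_, fun j hj => ?_⟩
  · fin_cases hi <;> norm_num [dotQ, Fin.sum_univ_four, Matrix.cons_val_two, Matrix.cons_val_three, Matrix.vecHead, Matrix.vecTail, J1r0, J1r2, J1r3, J1r6]
  · fin_cases j <;> simp_all <;>
      norm_num [dotQ, Fin.sum_univ_four, Matrix.cons_val_two, Matrix.cons_val_three, Matrix.vecHead, Matrix.vecTail, J1r1, J1r4, J1r5, J1r7]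

lemma J1mc0237 : FanMaxCone J1rays {0,2,3,7} := by
  refine ⟨by decide, ![1,-3,1,1], fun i hi => ?_, fun j hj => ?_⟩
  · fin_cases hi <;> norm_num [dotQ, Fin.sum_univ_four, Matrix.cons_val_two, Matrix.cons_val_three, Matrix.vecHead, Matrix.vecTail, J1r0, J1r2, J1r3, J1r7]
  · fin_cases j <;> simp_all <;>
      norm_num [dotQ, Fin.sum_univ_four, Matrix.cons_val_two, Matrix.cons_val_three, Matrix.vecHead, Matrix.vecTail, J1r1, J1r4, J1r5, J1r6]

lemma J1mc0246 : FanMaxCone J1rays {0,2,4,6} := by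
  refine ⟨by decide, ![1,-2,1,-2], fun i hi => ?_, fun j hj => ?_⟩
  · fin_cases hi <;> norm_num [dotQ, Fin.sum_univ_four, Matrix.cons_val_two, Matrix.cons_val_three, Matrix.vecHead, Matrix.vecTail, J1r0, J1r2, J1r4, J1r6]
  · fin_cases j <;> simp_all <;>
      norm_num [dotQ, Fin.sum_univ_four, Matrix.cons_val_two, Matrix.cons_val_three, Matrix.vecHead, Matrix.vecTail, J1r1, J1r3, J1r5, J1r7]

lemma J1mc0247 : FanMaxCone J1rays {0,2,4,7} := by
  refine ⟨by decide, ![1,-3,1,-2], fun i hi => ?_, fun j hj => ?_⟩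
  · fin_cases hi <;> norm_num [dotQ, Fin.sum_univ_four, Matrix.cons_val_two, Matrix.cons_val_three, Matrix.vecHead, Matrix.vecTail, J1r0, J1r2, J1r4, J1r7]
  · fin_cases j <;> simp_all <;>
      norm_num [dotQ, Fin.sum_univ_four, Matrix.cons_val_two, Matrix.cons_val_three, Matrix.vecHead, Matrix.vecTail, J1r1, J1r3, J1r5, J1r6]

lemma J1nc012 : ¬ FanCone J1rays {0,1,2} := by
  rintro ⟨t, ⟨-, u, h1, h2⟩, hsub⟩
  have m0 := h1 0 (hsub (by decide))
  have m1 := h1 1 (hsub (by decide))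
  have m2 := h1 2 (hsub (by decide))
  simp [dotQ, Fin.sum_univ_four, J1r0, J1r1, J1r2] at m0 m1 m2
  by_cases h5 : (5 : Fin 8) ∈ t
  · have := h1 5 h5; simp [dotQ, Fin.sum_univ_four, J1r5] at this; linarith
  · have := h2 5 h5; simp [dotQ, Fin.sum_univ_four, J1r5] at this; linarith

lemma J1nc025 : ¬ FanCone J1rays {0,2,5} := by
  rintro ⟨t, ⟨-, u, h1, h2⟩, hsub⟩
  have m0 := h1 0 (hsub (by decide))
  have m2 := h1 2 (hsub (by decide))
  have m5 := h1 5 (hsub (by decide))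
  simp [dotQ, Fin.sum_univ_four, J1r0, J1r2, J1r5] at m0 m2 m5
  by_cases h6 : (6 : Fin 8) ∈ t
  · have := h1 6 h6; simp [dotQ, Fin.sum_univ_four, J1r6] at this; linarith
  · have := h2 6 h6; simp [dotQ, Fin.sum_univ_four, J1r6] at this; linarith

lemma J1nc67 : ¬ FanCone J1rays {6,7} := by
  rintro ⟨t, ⟨-, u, h1, h2⟩, hsub⟩
  have m6 := h1 6 (hsub (by decide))
  have m7 := h1 7 (hsub (by decide))
  simp [dotQ, Fin.sum_univ_four, J1r6, J1r7] at m6 m7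
  by_cases h2' : (2 : Fin 8) ∈ t
  · have := h1 2 h2'; simp [dotQ, Fin.sum_univ_four, J1r2] at this; linarith
  · have := h2 2 h2'; simp [dotQ, Fin.sum_univ_four, J1r2] at this; linarith

lemma J1nc0234 : ¬ FanCone J1rays {0,2,3,4} := by
  rintro ⟨t, ⟨-, u, h1, h2⟩, hsub⟩
  have m2 := h1 2 (hsub (by decide))
  have m3 := h1 3 (hsub (by decide))
  have m4 := h1 4 (hsub (by decide))
  simp [dotQ, Fin.sum_univ_four, J1r2, J1r3, J1r4] at m2 m3 m4
  linarith

lemma J1coneMono {s t : Finset (Fin 8)} (h : s ⊆ t) :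
    FanCone J1rays t → FanCone J1rays s :=
  fun ⟨t', hm, ht⟩ => ⟨t', hm, h.trans ht⟩

lemma J1nc0235 : ¬ FanCone J1rays {0,2,3,5} :=
  fun hc => J1nc025 (J1coneMono (by decide) hc)


theorem J1_ch2_V_eq_and_not_twoFano
    (A : Type*) [CommRing A] [Algebra ℚ A]
    -- `D i` = class of the invariant prime divisor `D_i = V(⟨v_i⟩)` in the rational Chow ring `A`
    (D : Fin 8 → A)
    -- `deg` = the degree map on 0-cycle classes
    (deg : A →ₗ[ℚ] ℚ)
    -- Stanley–Reisner relations of the fan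
    (hSR : ∀ s : Finset (Fin 8), ¬ FanCone J1rays s → ∏ i ∈ s, D i = 0)
    -- linear relations: `div(χᵘ) = ∑ᵢ ⟨u, vᵢ⟩ Dᵢ ∼ 0`
    (hlin : ∀ u : Fin 4 → ℚ, ∑ i, dotQ u (J1rays i) • D i = 0)
    -- normalization: a point, i.e. `V(σ)` for a maximal cone `σ`, has degree `1`
    (hdeg : ∀ s : Finset (Fin 8), FanMaxCone J1rays s → deg (∏ i ∈ s, D i) = 1) :
    deg (((2 : ℚ)⁻¹ • ∑ i, D i ^ 2) * (D 0 * D 2)) = -1 ∧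
    ¬ (∀ s : Finset (Fin 8), FanCone J1rays s → s.card = 2 →
        0 < deg (((2 : ℚ)⁻¹ • ∑ i, D i ^ 2) * ∏ i ∈ s, D i)) := by
  -- key linear relation applied to any cycle `m`
  have hkey : ∀ (u : Fin 4 → ℚ) (m : A), ∑ i, dotQ u (J1rays i) * deg (D i * m) = 0 := by
    intro u m
    have h : ∑ i, dotQ u (J1rays i) • (D i * m) = 0 := by
      rw [show (0:A) = 0 * m by ring, ← hlin u, Finset.sum_mul]
      exact Finset.sum_congr rfl fun i _ => (smul_mul_assoc _ _ _).symm
    simpa [map_sum, map_smul, smul_eq_mul] using congrArg deg h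
  -- Stanley–Reisner product vanishing
  have z012 : D 0 * D 1 * D 2 = 0 := by
    have h := hSR {0,1,2} J1nc012
    rw [show (∏ i ∈ ({0,1,2} : Finset (Fin 8)), D i) = D 0 * D 1 * D 2 from by
      simp [Finset.prod_insert, Finset.mem_insert]; try ring] at h
    exact h
  have z025 : D 0 * D 2 * D 5 = 0 := by
    have h := hSR {0,2,5} J1nc025
    rw [show (∏ i ∈ ({0,2,5} : Finset (Fin 8)), D i) = D 0 * D 2 * D 5 from by
      simp [Finset.prod_insert, Finset.mem_insert]; try ring] at h
    exact h
  have z67 : D 6 * D 7 = 0 := by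
    have h := hSR {6,7} J1nc67
    rw [show (∏ i ∈ ({6,7} : Finset (Fin 8)), D i) = D 6 * D 7 from by
      simp [Finset.prod_insert, Finset.mem_insert]; try ring] at h
    exact h
  have z0234 : D 0 * D 2 * D 3 * D 4 = 0 := by
    have h := hSR {0,2,3,4} J1nc0234
    rw [show (∏ i ∈ ({0,2,3,4} : Finset (Fin 8)), D i) = D 0 * D 2 * D 3 * D 4 from by
      simp [Finset.prod_insert, Finset.mem_insert]; try ring] at h
    exact h
  have z0235 : D 0 * D 2 * D 3 * D 5 = 0 := by
    have h := hSR {0,2,3,5} J1nc0235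
    rw [show (∏ i ∈ ({0,2,3,5} : Finset (Fin 8)), D i) = D 0 * D 2 * D 3 * D 5 from by
      simp [Finset.prod_insert, Finset.mem_insert]; try ring] at h
    exact h
  -- degrees of the maximal-cone points, in convenient shapes
  have d0236 : deg (D 6 * (D 0 * D 2 * D 3)) = 1 := by
    have h := hdeg {0,2,3,6} J1mc0236
    rw [show (∏ i ∈ ({0,2,3,6} : Finset (Fin 8)), D i) = D 6 * (D 0 * D 2 * D 3) from by
      simp [Finset.prod_insert, Finset.mem_insert]; try ring] at h
    exact h
  have d0237 : deg (D 7 * (D 0 * D 2 * D 3)) = 1 := by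
    have h := hdeg {0,2,3,7} J1mc0237
    rw [show (∏ i ∈ ({0,2,3,7} : Finset (Fin 8)), D i) = D 7 * (D 0 * D 2 * D 3) from by
      simp [Finset.prod_insert, Finset.mem_insert]; try ring] at h
    exact h
  have d0246 : deg (D 4 * (D 0 * D 2 * D 6)) = 1 := by
    have h := hdeg {0,2,4,6} J1mc0246
    rw [show (∏ i ∈ ({0,2,4,6} : Finset (Fin 8)), D i) = D 4 * (D 0 * D 2 * D 6) from by
      simp [Finset.prod_insert, Finset.mem_insert]; try ring] at h
    exact h
  have d0247 : deg (D 4 * (D 0 * D 2 * D 7)) = 1 := by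
    have h := hdeg {0,2,4,7} J1mc0247
    rw [show (∏ i ∈ ({0,2,4,7} : Finset (Fin 8)), D i) = D 4 * (D 0 * D 2 * D 7) from by
      simp [Finset.prod_insert, Finset.mem_insert]; try ring] at h
    exact h
  -- SR-induced vanishing degrees in needed shapes
  have zdeg : ∀ x : A, x = 0 → deg x = 0 := fun x h => by rw [h, map_zero]
  have v1 : deg (D 4 * (D 0 * D 2 * D 3)) = 0 :=
    zdeg _ (by rw [show D 4 * (D 0 * D 2 * D 3) = D 0 * D 2 * D 3 * D 4 from by ring, z0234])
  have v2 : deg (D 3 * (D 0 * D 2 * D 4)) = 0 :=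
    zdeg _ (by rw [show D 3 * (D 0 * D 2 * D 4) = D 0 * D 2 * D 3 * D 4 from by ring, z0234])
  have v3 : deg (D 5 * (D 0 * D 2 * D 3)) = 0 :=
    zdeg _ (by rw [show D 5 * (D 0 * D 2 * D 3) = D 0 * D 2 * D 3 * D 5 from by ring, z0235])
  have v4 : deg (D 1 * (D 0 * D 2 * D 6)) = 0 :=
    zdeg _ (by rw [show D 1 * (D 0 * D 2 * D 6) = D 0 * D 1 * D 2 * D 6 from by ring,
      show D 0 * D 1 * D 2 * D 6 = (D 0 * D 1 * D 2) * D 6 from by ring, z012, zero_mul])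
  have v5 : deg (D 5 * (D 0 * D 2 * D 6)) = 0 :=
    zdeg _ (by rw [show D 5 * (D 0 * D 2 * D 6) = (D 0 * D 2 * D 5) * D 6 from by ring, z025, zero_mul])
  have v6 : deg (D 7 * (D 0 * D 2 * D 6)) = 0 :=
    zdeg _ (by rw [show D 7 * (D 0 * D 2 * D 6) = (D 6 * D 7) * (D 0 * D 2) from by ring, z67, zero_mul])
  have v7 : deg (D 1 * (D 0 * D 2 * D 7)) = 0 :=
    zdeg _ (by rw [show D 1 * (D 0 * D 2 * D 7) = (D 0 * D 1 * D 2) * D 7 from by ring, z012, zero_mul])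
  have v8 : deg (D 5 * (D 0 * D 2 * D 7)) = 0 :=
    zdeg _ (by rw [show D 5 * (D 0 * D 2 * D 7) = (D 0 * D 2 * D 5) * D 7 from by ring, z025, zero_mul])
  have v9 : deg (D 6 * (D 0 * D 2 * D 7)) = 0 :=
    zdeg _ (by rw [show D 6 * (D 0 * D 2 * D 7) = (D 6 * D 7) * (D 0 * D 2) from by ring, z67, zero_mul])
  have v10 : deg (D 5 * (D 0 * D 2 * D 2)) = 0 :=
    zdeg _ (by rw [show D 5 * (D 0 * D 2 * D 2) = (D 0 * D 2 * D 5) * D 2 from by ring, z025, zero_mul])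
  have v11 : deg (D 5 * (D 0 * D 0 * D 2)) = 0 :=
    zdeg _ (by rw [show D 5 * (D 0 * D 0 * D 2) = (D 0 * D 2 * D 5) * D 0 from by ring, z025, zero_mul])
  -- derived intersection numbers
  have eA2 : deg (D 3 * (D 0 * D 2 * D 3)) = 0 := by
    have h := hkey ![0,0,0,1] (D 0 * D 2 * D 3)
    simp only [Fin.sum_univ_eight] at h
    norm_num [dotQ, Fin.sum_univ_four, Matrix.cons_val_two, Matrix.cons_val_three, Matrix.vecHead, Matrix.vecTail, J1r0, J1r1, J1r2, J1r3, J1r4, J1r5, J1r6, J1r7] at h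
    linarith
  have eA3 : deg (D 4 * (D 0 * D 2 * D 4)) = 0 := by
    have h := hkey ![0,0,0,1] (D 0 * D 2 * D 4)
    simp only [Fin.sum_univ_eight] at h
    norm_num [dotQ, Fin.sum_univ_four, Matrix.cons_val_two, Matrix.cons_val_three, Matrix.vecHead, Matrix.vecTail, J1r0, J1r1, J1r2, J1r3, J1r4, J1r5, J1r6, J1r7] at h
    linarith
  have eA4 : deg (D 6 * (D 0 * D 2 * D 6)) = 0 := by
    have h := hkey ![0,1,0,0] (D 0 * D 2 * D 6)
    simp only [Fin.sum_univ_eight] at h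
    norm_num [dotQ, Fin.sum_univ_four, Matrix.cons_val_two, Matrix.cons_val_three, Matrix.vecHead, Matrix.vecTail, J1r0, J1r1, J1r2, J1r3, J1r4, J1r5, J1r6, J1r7] at h
    linarith
  have eA5 : deg (D 7 * (D 0 * D 2 * D 7)) = 0 := by
    have h := hkey ![0,1,0,0] (D 0 * D 2 * D 7)
    simp only [Fin.sum_univ_eight] at h
    norm_num [dotQ, Fin.sum_univ_four, Matrix.cons_val_two, Matrix.cons_val_three, Matrix.vecHead, Matrix.vecTail, J1r0, J1r1, J1r2, J1r3, J1r4, J1r5, J1r6, J1r7] at h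
    linarith
  have eA7 : deg (D 0 * (D 0 * D 2 * D 6)) = 0 := by
    have h := hkey ![1,0,0,0] (D 0 * D 2 * D 6)
    simp only [Fin.sum_univ_eight] at h
    norm_num [dotQ, Fin.sum_univ_four, Matrix.cons_val_two, Matrix.cons_val_three, Matrix.vecHead, Matrix.vecTail, J1r0, J1r1, J1r2, J1r3, J1r4, J1r5, J1r6, J1r7] at h
    linarith
  have eA8 : deg (D 0 * (D 0 * D 2 * D 7)) = 0 := by
    have h := hkey ![1,0,0,0] (D 0 * D 2 * D 7)
    simp only [Fin.sum_univ_eight] at h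
    norm_num [dotQ, Fin.sum_univ_four, Matrix.cons_val_two, Matrix.cons_val_three, Matrix.vecHead, Matrix.vecTail, J1r0, J1r1, J1r2, J1r3, J1r4, J1r5, J1r6, J1r7] at h
    linarith
  have eA6 : deg (D 0 * (D 0 * D 0 * D 2)) = 0 := by
    have h := hkey ![1,0,0,0] (D 0 * D 0 * D 2)
    simp only [Fin.sum_univ_eight] at h
    norm_num [dotQ, Fin.sum_univ_four, Matrix.cons_val_two, Matrix.cons_val_three, Matrix.vecHead, Matrix.vecTail, J1r0, J1r1, J1r2, J1r3, J1r4, J1r5, J1r6, J1r7] at h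
    have b6 : deg (D 6 * (D 0 * D 0 * D 2)) = 0 := by
      rw [show D 6 * (D 0 * D 0 * D 2) = D 0 * (D 0 * D 2 * D 6) from by ring]; exact eA7
    have b7 : deg (D 7 * (D 0 * D 0 * D 2)) = 0 := by
      rw [show D 7 * (D 0 * D 0 * D 2) = D 0 * (D 0 * D 2 * D 7) from by ring]; exact eA8
    linarith
  have eA9 : deg (D 2 * (D 0 * D 2 * D 3)) = -1 := by
    have h := hkey ![0,0,1,0] (D 0 * D 2 * D 3)
    simp only [Fin.sum_univ_eight] at h
    norm_num [dotQ, Fin.sum_univ_four, Matrix.cons_val_two, Matrix.cons_val_three, Matrix.vecHead, Matrix.vecTail, J1r0, J1r1, J1r2, J1r3, J1r4, J1r5, J1r6, J1r7] at h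
    linarith
  have eA10 : deg (D 4 * (D 0 * D 2 * D 2)) = -1 := by
    have h := hkey ![0,0,0,1] (D 0 * D 2 * D 2)
    simp only [Fin.sum_univ_eight] at h
    norm_num [dotQ, Fin.sum_univ_four, Matrix.cons_val_two, Matrix.cons_val_three, Matrix.vecHead, Matrix.vecTail, J1r0, J1r1, J1r2, J1r3, J1r4, J1r5, J1r6, J1r7] at h
    have b3 : deg (D 3 * (D 0 * D 2 * D 2)) = -1 := by
      rw [show D 3 * (D 0 * D 2 * D 2) = D 2 * (D 0 * D 2 * D 3) from by ring]; exact eA9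
    linarith
  have eA11 : deg (D 2 * (D 0 * D 2 * D 6)) = 1 := by
    have h := hkey ![0,0,1,0] (D 0 * D 2 * D 6)
    simp only [Fin.sum_univ_eight] at h
    norm_num [dotQ, Fin.sum_univ_four, Matrix.cons_val_two, Matrix.cons_val_three, Matrix.vecHead, Matrix.vecTail, J1r0, J1r1, J1r2, J1r3, J1r4, J1r5, J1r6, J1r7] at h
    linarith
  have eA12 : deg (D 2 * (D 0 * D 2 * D 7)) = 1 := by
    have h := hkey ![0,0,1,0] (D 0 * D 2 * D 7)
    simp only [Fin.sum_univ_eight] at h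
    norm_num [dotQ, Fin.sum_univ_four, Matrix.cons_val_two, Matrix.cons_val_three, Matrix.vecHead, Matrix.vecTail, J1r0, J1r1, J1r2, J1r3, J1r4, J1r5, J1r6, J1r7] at h
    linarith
  have eA13 : deg (D 2 * (D 0 * D 2 * D 2)) = -2 := by
    have h := hkey ![0,0,1,0] (D 0 * D 2 * D 2)
    simp only [Fin.sum_univ_eight] at h
    norm_num [dotQ, Fin.sum_univ_four, Matrix.cons_val_two, Matrix.cons_val_three, Matrix.vecHead, Matrix.vecTail, J1r0, J1r1, J1r2, J1r3, J1r4, J1r5, J1r6, J1r7] at h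
    have b6 : deg (D 6 * (D 0 * D 2 * D 2)) = 1 := by
      rw [show D 6 * (D 0 * D 2 * D 2) = D 2 * (D 0 * D 2 * D 6) from by ring]; exact eA11
    have b7 : deg (D 7 * (D 0 * D 2 * D 2)) = 1 := by
      rw [show D 7 * (D 0 * D 2 * D 2) = D 2 * (D 0 * D 2 * D 7) from by ring]; exact eA12
    linarith
  -- the main computation
  have B0 : deg (D 0 ^ 2 * (D 0 * D 2)) = 0 := by
    rw [show D 0 ^ 2 * (D 0 * D 2) = D 0 * (D 0 * D 0 * D 2) from by ring]; exact eA6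
  have B1 : deg (D 1 ^ 2 * (D 0 * D 2)) = 0 :=
    zdeg _ (by rw [show D 1 ^ 2 * (D 0 * D 2) = (D 0 * D 1 * D 2) * D 1 from by ring, z012, zero_mul])
  have B2 : deg (D 2 ^ 2 * (D 0 * D 2)) = -2 := by
    rw [show D 2 ^ 2 * (D 0 * D 2) = D 2 * (D 0 * D 2 * D 2) from by ring]; exact eA13
  have B3 : deg (D 3 ^ 2 * (D 0 * D 2)) = 0 := by
    rw [show D 3 ^ 2 * (D 0 * D 2) = D 3 * (D 0 * D 2 * D 3) from by ring]; exact eA2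
  have B4 : deg (D 4 ^ 2 * (D 0 * D 2)) = 0 := by
    rw [show D 4 ^ 2 * (D 0 * D 2) = D 4 * (D 0 * D 2 * D 4) from by ring]; exact eA3
  have B5 : deg (D 5 ^ 2 * (D 0 * D 2)) = 0 :=
    zdeg _ (by rw [show D 5 ^ 2 * (D 0 * D 2) = (D 0 * D 2 * D 5) * D 5 from by ring, z025, zero_mul])
  have B6 : deg (D 6 ^ 2 * (D 0 * D 2)) = 0 := by
    rw [show D 6 ^ 2 * (D 0 * D 2) = D 6 * (D 0 * D 2 * D 6) from by ring]; exact eA4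
  have B7 : deg (D 7 ^ 2 * (D 0 * D 2)) = 0 := by
    rw [show D 7 ^ 2 * (D 0 * D 2) = D 7 * (D 0 * D 2 * D 7) from by ring]; exact eA5
  have hmain : deg (((2 : ℚ)⁻¹ • ∑ i, D i ^ 2) * (D 0 * D 2)) = -1 := by
    rw [show ((2 : ℚ)⁻¹ • ∑ i, D i ^ 2) * (D 0 * D 2)
        = (2 : ℚ)⁻¹ • ∑ i : Fin 8, D i ^ 2 * (D 0 * D 2) from by
      rw [smul_mul_assoc, Finset.sum_mul]]
    rw [map_smul, map_sum, Fin.sum_univ_eight, B0, B1, B2, B3, B4, B5, B6, B7]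
    norm_num
  refine ⟨hmain, fun h => ?_⟩
  have hc : FanCone J1rays {0,2} := ⟨{0,2,3,6}, J1mc0236, by decide⟩
  have hlt := h {0,2} hc (by decide)
  rw [show (∏ i ∈ ({0,2} : Finset (Fin 8)), D i) = D 0 * D 2 from by
    simp [Finset.prod_insert, Finset.mem_insert]; try ring] at hlt
  linarith
end

section
/- Let X = X_Σ be the smooth toric Fano 4-fold K_1, where Σ is the complete fan in N ≅ Z^4 whose maximal cones are the cones over the facets of the convex hull of its minimal ray generators v_1 = e_1, v_2 = e_2, v_3 = e_3, v_4 = e_4, v_5 = 2e_1 + 2e_2 − e_3 − e_4, v_6 = −e_1, v_7 = −e_2, v_8 = −e_1 − e_2, v_9 = e_1 + e_2. Then ch_2(T_X) · V(⟨v_3, v_4⟩) = −3; in particular X is not 2-Fano. -/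
/-!
The toric Fano 4-fold `K₁` of the (Batyrev) classification of smooth toric Fano 4-folds
satisfies `ch₂(T_X) · V(⟨v3, v4⟩) = -3`; in particular `X = X_Σ` is not 2-Fano.

Since Mathlib has no toric geometry, we model the situation faithfully and concretely:
* the fan `Σ` is the complete fan in `ℤ⁴ ⊗ ℚ` whose maximal cones are the cones over the
  facets of the convex hull of the minimal ray generators (a facet corresponds to a set `s`
  of rays lying on a hyperplane `⟨u, ·⟩ = 1` with all remaining rays strictly below it);
* the rational Chow ring of the associated smooth complete toric variety is presented, as a
  commutative `ℚ`-algebra, by the classes `D i` of the invariant divisors subject to the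
  Stanley–Reisner relations and the linear relations `div(χᵘ) ∼ 0`, together with the degree
  map `deg` sending the class of a point (the product of the divisors of a maximal cone) to 1;
* `ch₂(T_X) = ½ ∑ᵢ Dᵢ²`, the class of the invariant surface `V(⟨v_i, v_j⟩)` is `D i * D j`,
  and `X` is 2-Fano iff `ch₂(T_X) · S > 0` for every irreducible surface `S ⊆ X` (so in
  particular for every invariant surface).
-/

open Finset

/-- The minimal ray generators of the fan of the toric Fano 4-fold `K₁`:
`v₁ = e₁`, `v₂ = e₂`, `v₃ = e₃`, `v₄ = e₄`, `v₅ = 2e₁ + 2e₂ - e₃ - e₄`, `v₆ = -e₁`, `v₇ = -e₂`, `v₈ = -e₁ - e₂`, `v₉ = e₁ + e₂`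
(indexed here by `0, …, 8`). -/
def K1rays : Fin 9 → Fin 4 → ℚ :=
  ![![1,0,0,0], ![0,1,0,0], ![0,0,1,0], ![0,0,0,1], ![2,2,-1,-1], ![-1,0,0,0], ![0,-1,0,0], ![-1,-1,0,0], ![1,1,0,0]]

open Finset in
lemma sum_univ_nine' {β : Type*} [AddCommMonoid β] (f : Fin 9 → β) :
    ∑ i, f i = f 0 + f 1 + f 2 + f 3 + f 4 + f 5 + f 6 + f 7 + f 8 := by
  rw [Fin.sum_univ_castSucc, Fin.sum_univ_eight]
  rfl

lemma dq0 (u : Fin 4 → ℚ) : dotQ u (K1rays 0) = u 0 := by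
  simp [dotQ, show K1rays 0 = ![1,0,0,0] from rfl, Fin.sum_univ_four]
lemma dq1 (u : Fin 4 → ℚ) : dotQ u (K1rays 1) = u 1 := by
  simp [dotQ, show K1rays 1 = ![0,1,0,0] from rfl, Fin.sum_univ_four]
lemma dq2 (u : Fin 4 → ℚ) : dotQ u (K1rays 2) = u 2 := by
  simp [dotQ, show K1rays 2 = ![0,0,1,0] from rfl, Fin.sum_univ_four]
lemma dq3 (u : Fin 4 → ℚ) : dotQ u (K1rays 3) = u 3 := by
  simp [dotQ, show K1rays 3 = ![0,0,0,1] from rfl, Fin.sum_univ_four]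
lemma dq4 (u : Fin 4 → ℚ) : dotQ u (K1rays 4) = 2*u 0 + 2*u 1 - u 2 - u 3 := by
  simp [dotQ, show K1rays 4 = ![2,2,-1,-1] from rfl, Fin.sum_univ_four]; ring
lemma dq5 (u : Fin 4 → ℚ) : dotQ u (K1rays 5) = -u 0 := by
  simp [dotQ, show K1rays 5 = ![-1,0,0,0] from rfl, Fin.sum_univ_four]
lemma dq6 (u : Fin 4 → ℚ) : dotQ u (K1rays 6) = -u 1 := by
  simp [dotQ, show K1rays 6 = ![0,-1,0,0] from rfl, Fin.sum_univ_four]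
lemma dq7 (u : Fin 4 → ℚ) : dotQ u (K1rays 7) = -u 0 - u 1 := by
  simp [dotQ, show K1rays 7 = ![-1,-1,0,0] from rfl, Fin.sum_univ_four]; ring
lemma dq8 (u : Fin 4 → ℚ) : dotQ u (K1rays 8) = u 0 + u 1 := by
  simp [dotQ, show K1rays 8 = ![1,1,0,0] from rfl, Fin.sum_univ_four]

lemma nf_aux {t : Finset (Fin 9)} {u : Fin 4 → ℚ} (h1 : ∀ i ∈ t, dotQ u (K1rays i) = 1)
    (h2 : ∀ j ∉ t, dotQ u (K1rays j) < 1) (k : Fin 9) : dotQ u (K1rays k) ≤ 1 := by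
  by_cases hk : k ∈ t
  · exact le_of_eq (h1 k hk)
  · exact le_of_lt (h2 k hk)

lemma nf01 : ¬ FanCone K1rays {0,1} := by
  rintro ⟨t, ⟨-, u, h1, h2⟩, hs⟩
  have a0 := h1 0 (hs (by decide)); have a1 := h1 1 (hs (by decide))
  have a8 := nf_aux h1 h2 8
  rw [dq0] at a0; rw [dq1] at a1; rw [dq8] at a8; linarith

lemma nf05 : ¬ FanCone K1rays {0,5} := by
  rintro ⟨t, ⟨-, u, h1, h2⟩, hs⟩
  have a0 := h1 0 (hs (by decide)); have a5 := h1 5 (hs (by decide))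
  rw [dq0] at a0; rw [dq5] at a5; linarith

lemma nf07 : ¬ FanCone K1rays {0,7} := by
  rintro ⟨t, ⟨-, u, h1, h2⟩, hs⟩
  have a0 := h1 0 (hs (by decide)); have a7 := h1 7 (hs (by decide))
  have a6 := nf_aux h1 h2 6
  rw [dq0] at a0; rw [dq7] at a7; rw [dq6] at a6; linarith

lemma nf16 : ¬ FanCone K1rays {1,6} := by
  rintro ⟨t, ⟨-, u, h1, h2⟩, hs⟩
  have a1 := h1 1 (hs (by decide)); have a6 := h1 6 (hs (by decide))
  rw [dq1] at a1; rw [dq6] at a6; linarith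

lemma nf17 : ¬ FanCone K1rays {1,7} := by
  rintro ⟨t, ⟨-, u, h1, h2⟩, hs⟩
  have a1 := h1 1 (hs (by decide)); have a7 := h1 7 (hs (by decide))
  have a5 := nf_aux h1 h2 5
  rw [dq1] at a1; rw [dq7] at a7; rw [dq5] at a5; linarith

lemma nf56 : ¬ FanCone K1rays {5,6} := by
  rintro ⟨t, ⟨-, u, h1, h2⟩, hs⟩
  have a5 := h1 5 (hs (by decide)); have a6 := h1 6 (hs (by decide))
  have a7 := nf_aux h1 h2 7
  rw [dq5] at a5; rw [dq6] at a6; rw [dq7] at a7; linarith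

lemma nf58 : ¬ FanCone K1rays {5,8} := by
  rintro ⟨t, ⟨-, u, h1, h2⟩, hs⟩
  have a5 := h1 5 (hs (by decide)); have a8 := h1 8 (hs (by decide))
  have a1 := nf_aux h1 h2 1
  rw [dq5] at a5; rw [dq8] at a8; rw [dq1] at a1; linarith

lemma nf68 : ¬ FanCone K1rays {6,8} := by
  rintro ⟨t, ⟨-, u, h1, h2⟩, hs⟩
  have a6 := h1 6 (hs (by decide)); have a8 := h1 8 (hs (by decide))
  have a0 := nf_aux h1 h2 0
  rw [dq6] at a6; rw [dq8] at a8; rw [dq0] at a0; linarith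

lemma nf78 : ¬ FanCone K1rays {7,8} := by
  rintro ⟨t, ⟨-, u, h1, h2⟩, hs⟩
  have a7 := h1 7 (hs (by decide)); have a8 := h1 8 (hs (by decide))
  rw [dq7] at a7; rw [dq8] at a8; linarith

lemma nf234 : ¬ FanCone K1rays {2,3,4} := by
  rintro ⟨t, ⟨-, u, h1, h2⟩, hs⟩
  have a2 := h1 2 (hs (by decide)); have a3 := h1 3 (hs (by decide))
  have a4 := h1 4 (hs (by decide))
  have a8 := nf_aux h1 h2 8
  rw [dq2] at a2; rw [dq3] at a3; rw [dq4] at a4; rw [dq8] at a8; linarith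

lemma mc2457 : FanMaxCone K1rays {2,4,5,7} := by
  refine ⟨by decide, ![-1,0,1,-4], fun i hi => ?_, fun j hj => ?_⟩
  · fin_cases hi <;> norm_num [dq2, dq4, dq5, dq7, Matrix.cons_val_two, Matrix.cons_val_three]
  · have hj' : j ∈ ({0,1,3,6,8} : Finset (Fin 9)) := by fin_cases j <;> simp_all
    fin_cases hj' <;> norm_num [dq0, dq1, dq3, dq6, dq8, Matrix.cons_val_two, Matrix.cons_val_three]

lemma mc0236 : FanMaxCone K1rays {0,2,3,6} := by
  refine ⟨by decide, ![1,-1,1,1], fun i hi => ?_, fun j hj => ?_⟩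
  · fin_cases hi <;> norm_num [dq0, dq2, dq3, dq6, Matrix.cons_val_two, Matrix.cons_val_three]
  · have hj' : j ∈ ({1,4,5,7,8} : Finset (Fin 9)) := by fin_cases j <;> simp_all
    fin_cases hj' <;> norm_num [dq1, dq4, dq5, dq7, dq8, Matrix.cons_val_two, Matrix.cons_val_three]

theorem K1_ch2_V_eq_and_not_twoFano
    (A : Type*) [CommRing A] [Algebra ℚ A]
    -- `D i` = class of the invariant prime divisor `D_i = V(⟨v_i⟩)` in the rational Chow ring `A`
    (D : Fin 9 → A)
    -- `deg` = the degree map on 0-cycle classes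
    (deg : A →ₗ[ℚ] ℚ)
    -- Stanley–Reisner relations of the fan
    (hSR : ∀ s : Finset (Fin 9), ¬ FanCone K1rays s → ∏ i ∈ s, D i = 0)
    -- linear relations: `div(χᵘ) = ∑ᵢ ⟨u, vᵢ⟩ Dᵢ ∼ 0`
    (hlin : ∀ u : Fin 4 → ℚ, ∑ i, dotQ u (K1rays i) • D i = 0)
    -- normalization: a point, i.e. `V(σ)` for a maximal cone `σ`, has degree `1`
    (hdeg : ∀ s : Finset (Fin 9), FanMaxCone K1rays s → deg (∏ i ∈ s, D i) = 1) :
    deg (((2 : ℚ)⁻¹ • ∑ i, D i ^ 2) * (D 2 * D 3)) = -3 ∧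
    ¬ (∀ s : Finset (Fin 9), FanCone K1rays s → s.card = 2 →
        0 < deg (((2 : ℚ)⁻¹ • ∑ i, D i ^ 2) * ∏ i ∈ s, D i)) := by

  -- linear relations
  have l1 := hlin ![1,0,0,0]
  have l2 := hlin ![0,1,0,0]
  have l3 := hlin ![0,0,1,0]
  have l4 := hlin ![0,0,0,1]
  rw [sum_univ_nine'] at l1 l2 l3 l4
  simp only [dq0, dq1, dq2, dq3, dq4, dq5, dq6, dq7, dq8, Algebra.smul_def, map_ofNat,
    map_one, map_neg, map_zero, map_add, map_sub, Matrix.cons_val] at l1 l2 l3 l4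
  norm_num at l1 l2 l3 l4
  rw [show ((algebraMap ℚ A) 2 : A) = 2 from map_ofNat _ 2] at l1 l2
  have h2 : D 2 = D 4 := by linear_combination l3
  have h3 : D 3 = D 4 := by linear_combination l4
  have e0 : D 0 = D 5 + D 7 - D 8 - 2 * D 4 := by linear_combination l1
  have e1 : D 1 = D 6 + D 7 - D 8 - 2 * D 4 := by linear_combination l2
  -- Stanley–Reisner relations
  have z01 : D 0 * D 1 = 0 := by
    have h := hSR {0,1} nf01
    rwa [Finset.prod_insert (by decide), Finset.prod_singleton] at h
  have z05 : D 0 * D 5 = 0 := by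
    have h := hSR {0,5} nf05
    rwa [Finset.prod_insert (by decide), Finset.prod_singleton] at h
  have z07 : D 0 * D 7 = 0 := by
    have h := hSR {0,7} nf07
    rwa [Finset.prod_insert (by decide), Finset.prod_singleton] at h
  have z16 : D 1 * D 6 = 0 := by
    have h := hSR {1,6} nf16
    rwa [Finset.prod_insert (by decide), Finset.prod_singleton] at h
  have z17 : D 1 * D 7 = 0 := by
    have h := hSR {1,7} nf17
    rwa [Finset.prod_insert (by decide), Finset.prod_singleton] at h
  have z56 : D 5 * D 6 = 0 := by
    have h := hSR {5,6} nf56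
    rwa [Finset.prod_insert (by decide), Finset.prod_singleton] at h
  have z58 : D 5 * D 8 = 0 := by
    have h := hSR {5,8} nf58
    rwa [Finset.prod_insert (by decide), Finset.prod_singleton] at h
  have z68 : D 6 * D 8 = 0 := by
    have h := hSR {6,8} nf68
    rwa [Finset.prod_insert (by decide), Finset.prod_singleton] at h
  have z78 : D 7 * D 8 = 0 := by
    have h := hSR {7,8} nf78
    rwa [Finset.prod_insert (by decide), Finset.prod_singleton] at h
  have z234 : D 2 * (D 3 * D 4) = 0 := by
    have h := hSR {2,3,4} nf234
    rwa [Finset.prod_insert (by decide), Finset.prod_insert (by decide),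
      Finset.prod_singleton] at h
  -- rewrite everything in terms of D 4, …, D 8
  rw [e0] at z01 z05 z07
  rw [e1] at z01 z16 z17
  rw [h2, h3] at z234
  -- the key Chow-ring identity
  have key : (∑ i, D i ^ 2) * (D 2 * D 3) = (-6 : ℚ) • (D 2 * D 4 * D 5 * D 7) := by
    have h6 : ((-6 : ℚ)) • (D 2 * D 4 * D 5 * D 7) = -6 * (D 2 * D 4 * D 5 * D 7) := by
      rw [Algebra.smul_def, map_neg, map_ofNat]
    rw [h6, sum_univ_nine', h2, h3, e0, e1]
    linear_combination (-3 * D 4 ^ 2) * z56 + (3 * D 4 ^ 2) * z58 + (3 * D 4 ^ 2) * z68 +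
      (2 * D 4 ^ 2) * z78 + (-(D 4) - 4 * D 8 + 4 * D 7 + 6 * D 6 + 6 * D 5) * z234 +
      (2 * D 4 ^ 2) * z05 + (3 * D 4 ^ 2) * z07 + (2 * D 4 ^ 2) * z16 +
      (-3 * D 4 ^ 2) * z17 + (3 * D 4 ^ 2) * z01
  -- degree of the point class
  have hd1 : deg (D 2 * D 4 * D 5 * D 7) = 1 := by
    have h := hdeg {2,4,5,7} mc2457
    rw [Finset.prod_insert (by decide), Finset.prod_insert (by decide),
      Finset.prod_insert (by decide), Finset.prod_singleton] at h
    rw [show D 2 * D 4 * D 5 * D 7 = D 2 * (D 4 * (D 5 * D 7)) from by ring]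
    exact h
  -- the main degree computation
  have main : deg (((2 : ℚ)⁻¹ • ∑ i, D i ^ 2) * (D 2 * D 3)) = -3 := by
    rw [smul_mul_assoc, map_smul, key, map_smul, hd1]
    norm_num
  refine ⟨main, fun H => ?_⟩
  have h23 := H {2,3} ⟨{0,2,3,6}, mc0236, by decide⟩ (by decide)
  rw [Finset.prod_insert (by decide), Finset.prod_singleton] at h23
  rw [main] at h23
  linarith
end

section
/- Let X = X_Σ be the smooth toric Fano 4-fold numbered 108 in the completed Batyrev–Sato classification, where Σ is the complete fan in N ≅ Z^4 whose maximal cones are the cones over the facets of the convex hull of its minimal ray generators v_1 = e_1, v_2 = e_2, v_3 = e_3, v_4 = −e_1 − e_2 + e_4, v_5 = −e_1 − e_2 − e_3 + e_4, v_6 = −e_3, v_7 = −e_4, v_8 = e_1 − e_4, v_9 = e_4. Then ch_2(T_X) · V(⟨v_4, v_9⟩) = −1; in particular X is not 2-Fano. -/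
/-!
The toric Fano 4-fold `number 108 (in the completed Batyrev–Sato classification)` of the (Batyrev) classification of smooth toric Fano 4-folds
satisfies `ch₂(T_X) · V(⟨v4, v9⟩) = -1`; in particular `X = X_Σ` is not 2-Fano.

Since Mathlib has no toric geometry, we model the situation faithfully and concretely:
* the fan `Σ` is the complete fan in `ℤ⁴ ⊗ ℚ` whose maximal cones are the cones over the
  facets of the convex hull of the minimal ray generators (a facet corresponds to a set `s`
  of rays lying on a hyperplane `⟨u, ·⟩ = 1` with all remaining rays strictly below it);
* the rational Chow ring of the associated smooth complete toric variety is presented, as a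
  commutative `ℚ`-algebra, by the classes `D i` of the invariant divisors subject to the
  Stanley–Reisner relations and the linear relations `div(χᵘ) ∼ 0`, together with the degree
  map `deg` sending the class of a point (the product of the divisors of a maximal cone) to 1;
* `ch₂(T_X) = ½ ∑ᵢ Dᵢ²`, the class of the invariant surface `V(⟨v_i, v_j⟩)` is `D i * D j`,
  and `X` is 2-Fano iff `ch₂(T_X) · S > 0` for every irreducible surface `S ⊆ X` (so in
  particular for every invariant surface).
-/

open Finset

/-- The minimal ray generators of the fan of the toric Fano 4-fold `number 108 (in the completed Batyrev–Sato classification)`: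
`v₁ = e₁`, `v₂ = e₂`, `v₃ = e₃`, `v₄ = -e₁ - e₂ + e₄`, `v₅ = -e₁ - e₂ - e₃ + e₄`, `v₆ = -e₃`, `v₇ = -e₄`, `v₈ = e₁ - e₄`, `v₉ = e₄`
(indexed here by `0, …, 8`). -/
def X108rays : Fin 9 → Fin 4 → ℚ :=
  ![![1,0,0,0], ![0,1,0,0], ![0,0,1,0], ![-1,-1,0,1], ![-1,-1,-1,1], ![0,0,-1,0], ![0,0,0,-1], ![1,0,0,-1], ![0,0,0,1]]

@[simp] lemma X108rays_0 : X108rays 0 = ![1,0,0,0] := rfl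
@[simp] lemma X108rays_1 : X108rays 1 = ![0,1,0,0] := rfl
@[simp] lemma X108rays_2 : X108rays 2 = ![0,0,1,0] := rfl
@[simp] lemma X108rays_3 : X108rays 3 = ![-1,-1,0,1] := rfl
@[simp] lemma X108rays_4 : X108rays 4 = ![-1,-1,-1,1] := rfl
@[simp] lemma X108rays_5 : X108rays 5 = ![0,0,-1,0] := rfl
@[simp] lemma X108rays_6 : X108rays 6 = ![0,0,0,-1] := rfl
@[simp] lemma X108rays_7 : X108rays 7 = ![1,0,0,-1] := rfl
@[simp] lemma X108rays_8 : X108rays 8 = ![0,0,0,1] := rfl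

lemma sum9 {A : Type*} [AddCommMonoid A] (f : Fin 9 → A) :
    ∑ i, f i = f 0 + f 1 + f 2 + f 3 + f 4 + f 5 + f 6 + f 7 + f 8 := by
  rw [Fin.sum_univ_castSucc, Fin.sum_univ_eight]; rfl

lemma maxcone0238 : FanMaxCone X108rays {0,2,3,8} := by
  refine ⟨by decide, ![1,-1,1,1], ?_, ?_⟩ <;> intro j hj <;> fin_cases j <;>
    simp_all [dotQ, Fin.sum_univ_four] <;> try norm_num

section NF
variable {t : Finset (Fin 9)} {u : Fin 4 → ℚ}

lemma le_one (h1 : ∀ i ∈ t, dotQ u (X108rays i) = 1) (h2 : ∀ j ∉ t, dotQ u (X108rays j) < 1)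
    (j : Fin 9) : dotQ u (X108rays j) ≤ 1 := by
  by_cases h : j ∈ t
  · exact le_of_eq (h1 j h)
  · exact le_of_lt (h2 j h)

end NF

lemma nf06 : ¬ FanCone X108rays {0,6} := by
  rintro ⟨t, ⟨-, u, h1, h2⟩, hst⟩
  have a0 := h1 0 (hst (by decide))
  have a6 := h1 6 (hst (by decide))
  have a7 := le_one h1 h2 7
  have key : dotQ u (X108rays 7) = dotQ u (X108rays 0) + dotQ u (X108rays 6) := by
    simp [dotQ, Fin.sum_univ_four]; try ring
  linarith

lemma nf24 : ¬ FanCone X108rays {2,4} := by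
  rintro ⟨t, ⟨-, u, h1, h2⟩, hst⟩
  have a2 := h1 2 (hst (by decide))
  have a4 := h1 4 (hst (by decide))
  have a3 := le_one h1 h2 3
  have key : dotQ u (X108rays 3) = dotQ u (X108rays 2) + dotQ u (X108rays 4) := by
    simp [dotQ, Fin.sum_univ_four]; try ring
  linarith

lemma nf25 : ¬ FanCone X108rays {2,5} := by
  rintro ⟨t, ⟨-, u, h1, h2⟩, hst⟩
  have a2 := h1 2 (hst (by decide))
  have a5 := h1 5 (hst (by decide))
  have key : dotQ u (X108rays 2) + dotQ u (X108rays 5) = 0 := by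
    simp [dotQ, Fin.sum_univ_four]; try ring
  linarith

lemma nf35 : ¬ FanCone X108rays {3,5} := by
  rintro ⟨t, ⟨-, u, h1, h2⟩, hst⟩
  have a3 := h1 3 (hst (by decide))
  have a5 := h1 5 (hst (by decide))
  have a4 := le_one h1 h2 4
  have key : dotQ u (X108rays 4) = dotQ u (X108rays 3) + dotQ u (X108rays 5) := by
    simp [dotQ, Fin.sum_univ_four]; try ring
  linarith

lemma nf68_s17 : ¬ FanCone X108rays {6,8} := by
  rintro ⟨t, ⟨-, u, h1, h2⟩, hst⟩
  have a6 := h1 6 (hst (by decide))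
  have a8 := h1 8 (hst (by decide))
  have key : dotQ u (X108rays 6) + dotQ u (X108rays 8) = 0 := by
    simp [dotQ, Fin.sum_univ_four]; try ring
  linarith

lemma nf78_s17 : ¬ FanCone X108rays {7,8} := by
  rintro ⟨t, ⟨-, u, h1, h2⟩, hst⟩
  have a7 := h1 7 (hst (by decide))
  have a8 := h1 8 (hst (by decide))
  have a0 := le_one h1 h2 0
  have key : dotQ u (X108rays 0) = dotQ u (X108rays 7) + dotQ u (X108rays 8) := by
    simp [dotQ, Fin.sum_univ_four]; try ring
  linarith

lemma nf013 : ¬ FanCone X108rays {0,1,3} := by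
  rintro ⟨t, ⟨-, u, h1, h2⟩, hst⟩
  have a0 := h1 0 (hst (by decide))
  have a1 := h1 1 (hst (by decide))
  have a3 := h1 3 (hst (by decide))
  have a8 := le_one h1 h2 8
  have key : dotQ u (X108rays 8) =
      dotQ u (X108rays 0) + dotQ u (X108rays 1) + dotQ u (X108rays 3) := by
    simp [dotQ, Fin.sum_univ_four]; try ring
  linarith

lemma nf014 : ¬ FanCone X108rays {0,1,4} := by
  rintro ⟨t, ⟨-, u, h1, h2⟩, hst⟩
  have a0 := h1 0 (hst (by decide))
  have a1 := h1 1 (hst (by decide))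
  have a4 := h1 4 (hst (by decide))
  have a5 := le_one h1 h2 5
  have a8 := le_one h1 h2 8
  have key : dotQ u (X108rays 5) + dotQ u (X108rays 8) =
      dotQ u (X108rays 0) + dotQ u (X108rays 1) + dotQ u (X108rays 4) := by
    simp [dotQ, Fin.sum_univ_four]; try ring
  linarith


theorem X108_ch2_V_eq_and_not_twoFano
    (A : Type*) [CommRing A] [Algebra ℚ A]
    -- `D i` = class of the invariant prime divisor `D_i = V(⟨v_i⟩)` in the rational Chow ring `A`
    (D : Fin 9 → A)
    -- `deg` = the degree map on 0-cycle classes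
    (deg : A →ₗ[ℚ] ℚ)
    -- Stanley–Reisner relations of the fan
    (hSR : ∀ s : Finset (Fin 9), ¬ FanCone X108rays s → ∏ i ∈ s, D i = 0)
    -- linear relations: `div(χᵘ) = ∑ᵢ ⟨u, vᵢ⟩ Dᵢ ∼ 0`
    (hlin : ∀ u : Fin 4 → ℚ, ∑ i, dotQ u (X108rays i) • D i = 0)
    -- normalization: a point, i.e. `V(σ)` for a maximal cone `σ`, has degree `1`
    (hdeg : ∀ s : Finset (Fin 9), FanMaxCone X108rays s → deg (∏ i ∈ s, D i) = 1) :
    deg (((2 : ℚ)⁻¹ • ∑ i, D i ^ 2) * (D 3 * D 8)) = -1 ∧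
    ¬ (∀ s : Finset (Fin 9), FanCone X108rays s → s.card = 2 →
        0 < deg (((2 : ℚ)⁻¹ • ∑ i, D i ^ 2) * ∏ i ∈ s, D i)) := by

  -- linear relations
  have e0 : D 0 = D 3 + D 4 - D 7 := by
    have h := hlin ![1,0,0,0]
    rw [sum9] at h
    norm_num [dotQ, Fin.sum_univ_four, Matrix.cons_val_two, Matrix.cons_val_three, Matrix.vecHead, Matrix.vecTail] at h
    linear_combination h
  have e1 : D 1 = D 3 + D 4 := by
    have h := hlin ![0,1,0,0]
    rw [sum9] at h
    norm_num [dotQ, Fin.sum_univ_four, Matrix.cons_val_two, Matrix.cons_val_three, Matrix.vecHead, Matrix.vecTail] at h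
    linear_combination h
  have e2 : D 2 = D 4 + D 5 := by
    have h := hlin ![0,0,1,0]
    rw [sum9] at h
    norm_num [dotQ, Fin.sum_univ_four, Matrix.cons_val_two, Matrix.cons_val_three, Matrix.vecHead, Matrix.vecTail] at h
    linear_combination h
  have e8 : D 8 = D 6 + D 7 - D 3 - D 4 := by
    have h := hlin ![0,0,0,1]
    rw [sum9] at h
    norm_num [dotQ, Fin.sum_univ_four, Matrix.cons_val_two, Matrix.cons_val_three, Matrix.vecHead, Matrix.vecTail] at h
    linear_combination h
  -- Stanley–Reisner relations, with `D 0, D 1, D 2, D 8` eliminated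
  have s06 : (D 3 + D 4 - D 7) * D 6 = 0 := by
    have h := hSR {0,6} nf06; rw [Finset.prod_pair (by decide), e0] at h; exact h
  have s24 : (D 4 + D 5) * D 4 = 0 := by
    have h := hSR {2,4} nf24; rw [Finset.prod_pair (by decide), e2] at h; exact h
  have s25 : (D 4 + D 5) * D 5 = 0 := by
    have h := hSR {2,5} nf25; rw [Finset.prod_pair (by decide), e2] at h; exact h
  have s35 : D 3 * D 5 = 0 := by
    have h := hSR {3,5} nf35; rw [Finset.prod_pair (by decide)] at h; exact h
  have s68 : D 6 * (D 6 + D 7 - D 3 - D 4) = 0 := by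
    have h := hSR {6,8} nf68_s17; rw [Finset.prod_pair (by decide), e8] at h; exact h
  have s78 : D 7 * (D 6 + D 7 - D 3 - D 4) = 0 := by
    have h := hSR {7,8} nf78_s17; rw [Finset.prod_pair (by decide), e8] at h; exact h
  have s013 : (D 3 + D 4 - D 7) * ((D 3 + D 4) * D 3) = 0 := by
    have h := hSR {0,1,3} nf013
    rw [show ({0,1,3} : Finset (Fin 9)) = insert 0 {1,3} from rfl,
      Finset.prod_insert (by decide), Finset.prod_pair (by decide), e0, e1] at h
    exact h
  have s014 : (D 3 + D 4 - D 7) * ((D 3 + D 4) * D 4) = 0 := by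
    have h := hSR {0,1,4} nf014
    rw [show ({0,1,4} : Finset (Fin 9)) = insert 0 {1,4} from rfl,
      Finset.prod_insert (by decide), Finset.prod_pair (by decide), e0, e1] at h
    exact h
  -- the degree of the point class
  have hP : deg (D 0 * D 2 * D 3 * D 8) = 1 := by
    have h := hdeg {0,2,3,8} maxcone0238
    rw [show ({0,2,3,8} : Finset (Fin 9)) = insert 0 (insert 2 {3,8}) from rfl,
      Finset.prod_insert (by decide), Finset.prod_insert (by decide),
      Finset.prod_pair (by decide)] at h
    rw [mul_assoc, mul_assoc]
    exact h
  -- the key Chow-ring identity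
  have key : (∑ i, D i ^ 2) * (D 3 * D 8) =
      -(D 0 * D 2 * D 3 * D 8) - D 0 * D 2 * D 3 * D 8 := by
    rw [sum9 (fun i => D i ^ 2), e0, e1, e2, e8]
    linear_combination
      ((2) * D 6 * D 7 + (2) * D 6 ^ 2 + (2) * D 5 ^ 2 + (-3) * D 4 * D 7 + (-5) * D 4 * D 6 + (2) * D 4 * D 5 + (-2) * D 3 * D 7 + (-4) * D 3 * D 6 + (2) * D 3 * D 5 + (6) * D 3 * D 4 + (6) * D 3 ^ 2) * s06 +
      ((3) * D 6 * D 7 + (3) * D 6 ^ 2 + (1) * D 5 * D 6 + (-3) * D 4 * D 6 + (3) * D 3 * D 7 + (-1) * D 3 * D 5 + (-3) * D 3 * D 4 + (-3) * D 3 ^ 2) * s24 +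
      ((-1) * D 6 * D 7 + (-3) * D 6 ^ 2 + (3) * D 3 * D 7 + (-1) * D 3 * D 5 + (-3) * D 3 ^ 2) * s25 +
      ((-2) * D 7 ^ 2 + (-1) * D 5 * D 7 + (3) * D 5 * D 6 + (1) * D 5 ^ 2 + (4) * D 3 * D 7 + (1) * D 3 * D 5 + (-2) * D 3 ^ 2) * s35 +
      ((3) * D 5 ^ 2 + (-2) * D 4 * D 6 + (3) * D 3 * D 4) * s68 +
      ((2) * D 6 ^ 2 + (-3) * D 4 * D 6 + (3) * D 3 * D 7 + (-2) * D 3 * D 4) * s78 +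
      ((4) * D 7 + (-4) * D 4 + (-4) * D 3) * s013 +
      ((3) * D 6) * s014
  have main : deg (((2 : ℚ)⁻¹ • ∑ i, D i ^ 2) * (D 3 * D 8)) = -1 := by
    rw [smul_mul_assoc, map_smul, key, map_sub, map_neg, hP]
    norm_num
  refine ⟨main, ?_⟩
  intro H
  have h := H {3,8} ⟨{0,2,3,8}, maxcone0238, by decide⟩ (by decide)
  rw [Finset.prod_pair (by decide), main] at h
  exact absurd h (by norm_num)
end
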